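/- arXiv:0903.5510 — 5 statements merged into one kernel-verified Lean document; each statement's English description precedes it below -/
import Mathlib

section
/- The antipode S of the Hopf algebra O_{α,β}(GL_n) satisfies S²(x_{ij}) = (α^{-1}β)^{j−i} x_{ij} for all 1 ≤ i,j ≤ n. -/
open scoped TensorProduct

noncomputable section

universe u v

/-- The number of inversions (the length) of a permutation of `Fin n`. -/
def permLength {n : ℕ} (σ : Equiv.Perm (Fin n)) : ℕ :=
  (Finset.univ.filter fun p : Fin n × Fin n => p.1 < p.2 ∧ σ p.2 < σ p.1).card

/-- The defining relations of the two-parameter quantum matrix bialgebra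
`O_{α,β}(M_n)`, for a family `x i j` of elements of a `k`-algebra `A`. -/
def QMRel {k : Type u} [Field k] {A : Type v} [Ring A] [Algebra k A]
    (n : ℕ) (α β : k) (x : Fin n → Fin n → A) : Prop :=
  (∀ i j l : Fin n, j < l → x i l * x i j = α⁻¹ • (x i j * x i l)) ∧
  (∀ i j l : Fin n, i < j → x j l * x i l = β • (x i l * x j l)) ∧
  (∀ i j l m : Fin n, i < j → l < m → x j l * x i m = (β * α) • (x i m * x j l)) ∧
  (∀ i j l m : Fin n, i < j → l < m →
    x j m * x i l - x i l * x j m = (β - α) • (x i m * x j l))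

/-- The quantum determinant `g = ∑_σ (-β)^{-ℓ(σ)} x_{σ(1),1} ⋯ x_{σ(n),n}`. -/
def qdet {k : Type u} [Field k] {A : Type v} [Ring A] [Algebra k A]
    (n : ℕ) (β : k) (x : Fin n → Fin n → A) : A :=
  ∑ σ : Equiv.Perm (Fin n),
    ((-β)⁻¹ ^ permLength σ) • ((List.finRange n).map fun i => x (σ i) i).prod

section QTAux

variable {k : Type u} [Field k] {A : Type v} [Ring A] [Algebra k A] {n : ℕ}

/-- Diagonal entries of the R-matrix for two-parameter quantum matrices. -/
def qtR (α β : k) {n : ℕ} (a b : Fin n) : k :=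
  if a = b then 1 else if a < b then α else β⁻¹

/-- Off-diagonal entries of the R-matrix for two-parameter quantum matrices. -/
def qtT (α β : k) {n : ℕ} (a b : Fin n) : k :=
  if a < b then 1 - α * β⁻¹ else 0

lemma qtR_ne_zero {α β : k} (hα : α ≠ 0) (hβ : β ≠ 0) (a b : Fin n) :
    qtR α β a b ≠ 0 := by
  unfold qtR; split_ifs
  · exact one_ne_zero
  · exact hα
  · exact inv_ne_zero hβ

/-- The RTT-type consequence of the defining quantum matrix relations. -/
lemma qtRTT {α β : k} (hα : α ≠ 0) (hβ : β ≠ 0) (x : Fin n → Fin n → A)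
    (h1 : ∀ i j l : Fin n, j < l → x i l * x i j = α⁻¹ • (x i j * x i l))
    (h2 : ∀ i j l : Fin n, i < j → x j l * x i l = β • (x i l * x j l))
    (h3 : ∀ i j l m : Fin n, i < j → l < m → x j l * x i m = (β * α) • (x i m * x j l))
    (h4 : ∀ i j l m : Fin n, i < j → l < m →
      x j m * x i l - x i l * x j m = (β - α) • (x i m * x j l)) :
    ∀ a b e f : Fin n,
      qtR α β a b • (x a e * x b f) + qtT α β a b • (x b e * x a f)
        = qtR α β e f • (x b f * x a e) + qtT α β f e • (x b e * x a f) := by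
  have e4 : ∀ i j l m : Fin n, i < j → l < m →
      x j m * x i l = x i l * x j m + (β - α) • (x i m * x j l) := by
    intro i j l m hij hlm
    have := h4 i j l m hij hlm
    linear_combination (norm := module) this
  intro a b e f
  rcases lt_trichotomy a b with hab | rfl | hab <;>
    rcases lt_trichotomy e f with hef | rfl | hef
  · rw [show qtR α β a b = α by simp [qtR, hab, hab.ne],
        show qtT α β a b = 1 - α * β⁻¹ by simp [qtT, hab],
        show qtR α β e f = α by simp [qtR, hef, hef.ne],
        show qtT α β f e = 0 by simp [qtT, not_lt_of_gt hef],
        e4 a b e f hab hef, h3 a b e f hab hef]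
    match_scalars <;> field_simp <;> ring
  · rw [show qtR α β a b = α by simp [qtR, hab, hab.ne],
        show qtT α β a b = 1 - α * β⁻¹ by simp [qtT, hab],
        show qtR α β e e = 1 by simp [qtR],
        show qtT α β e e = 0 by simp [qtT],
        h2 a b e hab]
    match_scalars <;> field_simp <;> ring
  · rw [show qtR α β a b = α by simp [qtR, hab, hab.ne],
        show qtT α β a b = 1 - α * β⁻¹ by simp [qtT, hab],
        show qtR α β e f = β⁻¹ by simp [qtR, hef.ne', not_lt_of_gt hef],
        show qtT α β f e = 1 - α * β⁻¹ by simp [qtT, hef],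
        h3 a b f e hab hef]
    match_scalars <;> field_simp <;> ring
  · rw [show qtR α β a a = 1 by simp [qtR],
        show qtT α β a a = 0 by simp [qtT],
        show qtR α β e f = α by simp [qtR, hef, hef.ne],
        show qtT α β f e = 0 by simp [qtT, not_lt_of_gt hef],
        h1 a e f hef]
    match_scalars <;> field_simp <;> ring
  · simp [qtR, qtT]
  · rw [show qtR α β a a = 1 by simp [qtR],
        show qtT α β a a = 0 by simp [qtT],
        show qtR α β e f = β⁻¹ by simp [qtR, hef.ne', not_lt_of_gt hef],
        show qtT α β f e = 1 - α * β⁻¹ by simp [qtT, hef],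
        h1 a f e hef]
    match_scalars <;> field_simp <;> ring
  · rw [show qtR α β a b = β⁻¹ by simp [qtR, hab.ne', not_lt_of_gt hab],
        show qtT α β a b = 0 by simp [qtT, not_lt_of_gt hab],
        show qtR α β e f = α by simp [qtR, hef, hef.ne],
        show qtT α β f e = 0 by simp [qtT, not_lt_of_gt hef],
        h3 b a e f hab hef]
    match_scalars <;> field_simp <;> ring
  · rw [show qtR α β a b = β⁻¹ by simp [qtR, hab.ne', not_lt_of_gt hab],
        show qtT α β a b = 0 by simp [qtT, not_lt_of_gt hab],
        show qtR α β e e = 1 by simp [qtR],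
        show qtT α β e e = 0 by simp [qtT],
        h2 b a e hab]
    match_scalars <;> field_simp <;> ring
  · rw [show qtR α β a b = β⁻¹ by simp [qtR, hab.ne', not_lt_of_gt hab],
        show qtT α β a b = 0 by simp [qtT, not_lt_of_gt hab],
        show qtR α β e f = β⁻¹ by simp [qtR, hef.ne', not_lt_of_gt hef],
        show qtT α β f e = 1 - α * β⁻¹ by simp [qtT, hef],
        e4 b a f e hab hef]
    match_scalars <;> field_simp <;> ring

/-- Commutation of the inverse matrix `y` past `x`, sandwiched RTT relation. -/
lemma qtDagger {α β : k} (x y : Fin n → Fin n → A)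
    (hy1 : ∀ i j, (∑ s, y i s * x s j) = if i = j then (1:A) else 0)
    (hy2 : ∀ i j, (∑ s, x i s * y s j) = if i = j then (1:A) else 0)
    (hrtt : ∀ a b e f : Fin n,
      qtR α β a b • (x a e * x b f) + qtT α β a b • (x b e * x a f)
        = qtR α β e f • (x b f * x a e) + qtT α β f e • (x b e * x a f)) :
    ∀ a b c d : Fin n,
      qtR α β a d • (y b d * x a c)
          + (if a = d then ∑ f, qtT α β a f • (y b f * x f c) else 0)
        = qtR α β c b • (x a c * y b d)
          + (if b = c then ∑ h, qtT α β h b • (x a h * y h d) else 0) := by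
  intro a b c d
  have evalL :
      (∑ f : Fin n, ∑ h : Fin n,
        y b f * ((qtR α β a f • (x a c * x f h) + qtT α β a f • (x f c * x a h)) * y h d))
      = qtR α β a d • (y b d * x a c)
          + (if a = d then ∑ f, qtT α β a f • (y b f * x f c) else 0) := by
    have step1 : ∀ f : Fin n,
        (∑ h : Fin n,
          y b f * ((qtR α β a f • (x a c * x f h) + qtT α β a f • (x f c * x a h)) * y h d))
        = qtR α β a f • ((y b f * x a c) * (if f = d then (1:A) else 0))
            + qtT α β a f • ((y b f * x f c) * (if a = d then (1:A) else 0)) := by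
      intro f
      rw [← hy2 f d, ← hy2 a d, Finset.mul_sum, Finset.mul_sum, Finset.smul_sum,
        Finset.smul_sum, ← Finset.sum_add_distrib]
      refine Finset.sum_congr rfl fun h _ => ?_
      simp only [add_mul, mul_add, smul_mul_assoc, mul_smul_comm, mul_assoc]
    rw [Finset.sum_congr rfl fun f _ => step1 f, Finset.sum_add_distrib]
    congr 1
    · simp only [mul_ite, mul_one, mul_zero, smul_ite, smul_zero]
      rw [Finset.sum_ite_eq' Finset.univ d fun f => qtR α β a f • (y b f * x a c)]
      simp
    · simp only [mul_ite, mul_one, mul_zero, smul_ite, smul_zero]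
      split_ifs <;> simp
  have evalR :
      (∑ f : Fin n, ∑ h : Fin n,
        y b f * ((qtR α β c h • (x f h * x a c) + qtT α β h c • (x f c * x a h)) * y h d))
      = qtR α β c b • (x a c * y b d)
          + (if b = c then ∑ h, qtT α β h b • (x a h * y h d) else 0) := by
    rw [Finset.sum_comm]
    have step1 : ∀ h : Fin n,
        (∑ f : Fin n,
          y b f * ((qtR α β c h • (x f h * x a c) + qtT α β h c • (x f c * x a h)) * y h d))
        = qtR α β c h • ((if b = h then (1:A) else 0) * (x a c * y h d))
            + qtT α β h c • ((if b = c then (1:A) else 0) * (x a h * y h d)) := by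
      intro h
      rw [← hy1 b h, ← hy1 b c, Finset.sum_mul, Finset.sum_mul, Finset.smul_sum,
        Finset.smul_sum, ← Finset.sum_add_distrib]
      refine Finset.sum_congr rfl fun f _ => ?_
      simp only [add_mul, mul_add, smul_mul_assoc, mul_smul_comm, mul_assoc]
    rw [Finset.sum_congr rfl fun h _ => step1 h, Finset.sum_add_distrib]
    congr 1
    · simp only [ite_mul, one_mul, zero_mul, smul_ite, smul_zero]
      rw [Finset.sum_ite_eq Finset.univ b fun h => qtR α β c h • (x a c * y h d)]
      simp
    · simp only [ite_mul, one_mul, zero_mul, smul_ite, smul_zero]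
      rcases eq_or_ne b c with rfl | hbc
      · simp
      · simp [hbc]
  calc qtR α β a d • (y b d * x a c)
          + (if a = d then ∑ f, qtT α β a f • (y b f * x f c) else 0)
      = ∑ f : Fin n, ∑ h : Fin n,
          y b f * ((qtR α β a f • (x a c * x f h) + qtT α β a f • (x f c * x a h)) * y h d) :=
        evalL.symm
    _ = ∑ f : Fin n, ∑ h : Fin n,
          y b f * ((qtR α β c h • (x f h * x a c) + qtT α β h c • (x f c * x a h)) * y h d) := by
        refine Finset.sum_congr rfl fun f _ => Finset.sum_congr rfl fun h _ => ?_
        rw [hrtt a f c h]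
    _ = _ := evalR

/-- Geometric-sum identity for the weights. -/
lemma qtGeo (α β : k) (f : Fin n) :
    (∑ a : Fin n, (α * β⁻¹) ^ (a : ℕ) * qtT α β a f) = 1 - (α * β⁻¹) ^ (f : ℕ) := by
  set q := α * β⁻¹ with hq
  have : ∀ a : Fin n, q ^ (a : ℕ) * qtT α β a f
      = if (a : ℕ) < (f : ℕ) then q ^ (a : ℕ) * (1 - q) else 0 := by
    intro a
    simp only [qtT, Fin.lt_def, ← hq]
    split_ifs <;> ring
  rw [Finset.sum_congr rfl fun a _ => this a, Fin.sum_univ_eq_sum_range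
    (fun m => if m < (f : ℕ) then q ^ m * (1 - q) else 0) n]
  rw [show (∑ m ∈ Finset.range n, if m < (f : ℕ) then q ^ m * (1 - q) else 0)
      = ∑ m ∈ Finset.range (f : ℕ), q ^ m * (1 - q) from ?_]
  · rw [← Finset.sum_mul]
    have := geom_sum_mul q (f : ℕ)
    linear_combination -this
  · rw [← Finset.sum_subset (Finset.range_subset_range.mpr f.2.le)
      (fun m _ hm => by rw [if_neg (by simpa using hm)])]
    exact Finset.sum_congr rfl fun m hm => if_pos (Finset.mem_range.mp hm)

/-- The weighted trace of the sandwiched RTT relation. -/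
lemma qtMaster {α β : k} (x y : Fin n → Fin n → A)
    (hy1 : ∀ i j, (∑ s, y i s * x s j) = if i = j then (1:A) else 0)
    (hdag : ∀ a b c d : Fin n,
      qtR α β a d • (y b d * x a c)
          + (if a = d then ∑ f, qtT α β a f • (y b f * x f c) else 0)
        = qtR α β c b • (x a c * y b d)
          + (if b = c then ∑ h, qtT α β h b • (x a h * y h d) else 0)) :
    ∀ b c : Fin n,
      qtR α β c b • (∑ a : Fin n, (α * β⁻¹) ^ (a : ℕ) • (x a c * y b a))
          + (if b = c then
              ∑ h : Fin n, qtT α β h b •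
                (∑ a : Fin n, (α * β⁻¹) ^ (a : ℕ) • (x a h * y h a)) else 0)
        = if b = c then (1:A) else 0 := by
  intro b c
  set q := α * β⁻¹ with hq
  have hsum := congrArg (Finset.univ.sum)
    (funext fun a : Fin n => congrArg (fun v => q ^ (a : ℕ) • v) (hdag a b c a))
  simp only [eq_self_iff_true, if_true] at hsum
  have hL : (∑ a : Fin n, q ^ (a : ℕ) •
        (qtR α β a a • (y b a * x a c)
          + (∑ f, qtT α β a f • (y b f * x f c))))
      = if b = c then (1:A) else 0 := by
    have h1 : ∀ a : Fin n, q ^ (a : ℕ) •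
        (qtR α β a a • (y b a * x a c)
          + (∑ f, qtT α β a f • (y b f * x f c)))
        = q ^ (a : ℕ) • (y b a * x a c)
          + ∑ f, (q ^ (a : ℕ) * qtT α β a f) • (y b f * x f c) := by
      intro a
      rw [show qtR α β a a = 1 from by simp [qtR], one_smul, smul_add,
        Finset.smul_sum]
      congr 1
      exact Finset.sum_congr rfl fun f _ => (mul_smul _ _ _).symm
    rw [Finset.sum_congr rfl fun a _ => h1 a, Finset.sum_add_distrib, Finset.sum_comm]
    have h2 : ∀ f : Fin n,
        (∑ a : Fin n, (q ^ (a : ℕ) * qtT α β a f) • (y b f * x f c))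
        = (1 - q ^ (f : ℕ)) • (y b f * x f c) := by
      intro f
      rw [← Finset.sum_smul, hq, qtGeo α β f]
    rw [Finset.sum_congr rfl fun f _ => h2 f, ← Finset.sum_add_distrib]
    have h3 : ∀ f : Fin n, q ^ (f : ℕ) • (y b f * x f c)
        + (1 - q ^ (f : ℕ)) • (y b f * x f c) = y b f * x f c := by
      intro f
      rw [← add_smul]
      module
    rw [Finset.sum_congr rfl fun f _ => h3 f, hy1 b c]
  rw [hL] at hsum
  have h4 : ∀ a : Fin n, q ^ (a : ℕ) •
      (qtR α β c b • (x a c * y b a)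
        + (if b = c then ∑ h, qtT α β h b • (x a h * y h a) else 0))
      = qtR α β c b • (q ^ (a : ℕ) • (x a c * y b a))
        + (if b = c then ∑ h, qtT α β h b • (q ^ (a : ℕ) • (x a h * y h a)) else 0) := by
    intro a
    rw [smul_add]
    congr 1
    · rw [smul_comm]
    · split_ifs
      · rw [Finset.smul_sum]
        exact Finset.sum_congr rfl fun h _ => smul_comm _ _ _
      · rw [smul_zero]
  have hR : (∑ a : Fin n, q ^ (a : ℕ) •
      (qtR α β c b • (x a c * y b a)
        + (if b = c then ∑ h, qtT α β h b • (x a h * y h a) else 0)))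
      = qtR α β c b • (∑ a : Fin n, q ^ (a : ℕ) • (x a c * y b a))
          + (if b = c then
              ∑ h : Fin n, qtT α β h b •
                (∑ a : Fin n, q ^ (a : ℕ) • (x a h * y h a)) else 0) := by
    rw [Finset.sum_congr rfl fun a _ => h4 a, Finset.sum_add_distrib, ← Finset.smul_sum]
    congr 1
    split_ifs
    · rw [Finset.sum_comm]
      exact Finset.sum_congr rfl fun h _ => Finset.smul_sum.symm
    · exact Finset.sum_const_zero
  exact hR.symm.trans hsum.symm

/-- The key identity (quantum trace): the "wrong-sided" weighted contraction of
`x` against its inverse matrix `y`. -/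
lemma qtK {α β : k} (hα : α ≠ 0) (hβ : β ≠ 0) (x y : Fin n → Fin n → A)
    (hy1 : ∀ i j, (∑ s, y i s * x s j) = if i = j then (1:A) else 0)
    (hy2 : ∀ i j, (∑ s, x i s * y s j) = if i = j then (1:A) else 0)
    (hrel : QMRel n α β x) :
    ∀ b c : Fin n, (∑ a : Fin n, (α * β⁻¹) ^ (a : ℕ) • (x a c * y b a))
      = if b = c then (α * β⁻¹) ^ (c : ℕ) • (1:A) else 0 := by
  obtain ⟨h1, h2, h3, h4⟩ := hrel
  have hrtt := qtRTT hα hβ x h1 h2 h3 h4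
  have hdag := qtDagger x y hy1 hy2 hrtt
  have hmaster := qtMaster x y hy1 hdag
  set q := α * β⁻¹ with hq
  set G : Fin n → Fin n → A := fun b c => ∑ a : Fin n, q ^ (a : ℕ) • (x a c * y b a)
    with hG
  have hoff : ∀ b c : Fin n, b ≠ c → G b c = 0 := by
    intro b c hbc
    have := hmaster b c
    rw [if_neg hbc, if_neg hbc, add_zero] at this
    have h0 : qtR α β c b • G b c = 0 := this
    have := congrArg (fun v => (qtR α β c b)⁻¹ • v) h0
    simpa [smul_smul, inv_mul_cancel₀ (qtR_ne_zero hα hβ c b)] using this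
  have hdiag : ∀ b : Fin n, G b b = q ^ (b : ℕ) • (1:A) := by
    have key : ∀ m : ℕ, ∀ b : Fin n, (b : ℕ) = m → G b b = q ^ (b : ℕ) • (1:A) := by
      intro m
      induction m using Nat.strong_induction_on with
      | _ m ih =>
        intro b hb
        have Eb := hmaster b b
        rw [if_pos rfl, if_pos rfl, show qtR α β b b = 1 from by simp [qtR],
          one_smul] at Eb
        have hterm : ∀ h : Fin n, qtT α β h b • G h h
            = (qtT α β h b * q ^ (h : ℕ)) • (1:A) := by
          intro h
          by_cases hhb : h < b
          · rw [ih (h : ℕ) (by rw [← hb]; exact hhb) h rfl, smul_smul]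
          · rw [show qtT α β h b = 0 from by simp [qtT, hhb], zero_smul, zero_mul,
              zero_smul]
        rw [Finset.sum_congr rfl fun h _ => hterm h] at Eb
        have hsc : (∑ h : Fin n, (qtT α β h b * q ^ (h : ℕ)) • (1:A))
            = (1 - q ^ (b : ℕ)) • (1:A) := by
          rw [← Finset.sum_smul]
          congr 1
          rw [← qtGeo α β b]
          exact Finset.sum_congr rfl fun h _ => mul_comm _ _
        rw [hsc] at Eb
        linear_combination (norm := module) Eb
    exact fun b => key (b : ℕ) b rfl
  intro b c
  rcases eq_or_ne b c with rfl | hbc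
  · rw [if_pos rfl]; exact hdiag b
  · rw [if_neg hbc]; exact hoff b c hbc

end QTAux

/-- the antipode of `O_{α,β}(GL_n)` satisfies
`S²(x_{ij}) = (α⁻¹ β)^{j-i} • x_{ij}`. -/
theorem antipode_sq_xij
    {k : Type u} [Field k] [IsAlgClosed k] [CharZero k]
    {A : Type v} [Ring A] [HopfAlgebra k A]
    (n : ℕ) (hn : 0 < n) (α β : k) (hα : α ≠ 0) (hβ : β ≠ 0)
    (x : Fin n → Fin n → A)
    (hrel : QMRel n α β x)
    (hcomul : ∀ i j, Coalgebra.comul (R := k) (x i j) = ∑ s : Fin n, x i s ⊗ₜ[k] x s j)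
    (hcounit : ∀ i j, Coalgebra.counit (R := k) (x i j) = if i = j then (1 : k) else 0)
    (hdet : IsUnit (qdet n β x)) :
    ∀ i j : Fin n,
      HopfAlgebra.antipode (R := k) (HopfAlgebra.antipode (R := k) (x i j)) =
        ((α⁻¹ * β) ^ (((j : ℕ) : ℤ) - ((i : ℕ) : ℤ))) • x i j := by
  classical
  set y : Fin n → Fin n → A := fun i j => HopfAlgebra.antipode (R := k) (x i j) with hy
  set z : Fin n → Fin n → A := fun i j => HopfAlgebra.antipode (R := k) (y i j) with hz
  -- the antipode axioms for the x's
  have hy1 : ∀ i j, (∑ s, y i s * x s j) = if i = j then (1:A) else 0 := by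
    intro i j
    have h := HopfAlgebra.mul_antipode_rTensor_comul_apply (R := k) (a := x i j)
    rw [hcomul, map_sum, hcounit] at h
    simp only [LinearMap.rTensor_tmul, map_sum, LinearMap.mul'_apply] at h
    rw [hy]
    rw [h]
    split_ifs <;> simp
  have hy2 : ∀ i j, (∑ s, x i s * y s j) = if i = j then (1:A) else 0 := by
    intro i j
    have h := HopfAlgebra.mul_antipode_lTensor_comul_apply (R := k) (a := x i j)
    rw [hcomul, map_sum, hcounit] at h
    simp only [LinearMap.lTensor_tmul, map_sum, LinearMap.mul'_apply] at h
    rw [hy]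
    rw [h]
    split_ifs <;> simp
  -- counit of the y's
  have hcy : ∀ i j, Coalgebra.counit (R := k) (y i j) = if i = j then (1:k) else 0 := by
    intro i j
    have h := congrArg (Coalgebra.counit (R := k)) (hy2 i j)
    rw [map_sum] at h
    have h' : ∀ s, Coalgebra.counit (R := k) (x i s * y s j)
        = (if i = s then (1:k) else 0) * Coalgebra.counit (R := k) (y s j) := by
      intro s
      rw [Bialgebra.counit_mul, hcounit]
    rw [Finset.sum_congr rfl fun s _ => h' s] at h
    simp only [ite_mul, one_mul, zero_mul] at h
    rw [Finset.sum_ite_eq Finset.univ i fun s => Coalgebra.counit (R := k) (y s j)] at h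
    simp only [Finset.mem_univ, if_true] at h
    rw [h]
    split_ifs <;> simp
  -- comultiplication of the y's, via uniqueness of matrix inverses over A ⊗ A
  have hcomul_y : ∀ i j, Coalgebra.comul (R := k) (y i j)
      = ∑ s : Fin n, y s j ⊗ₜ[k] y i s := by
    set CC : Fin n → Fin n → (A ⊗[k] A) := fun i j => Coalgebra.comul (R := k) (y i j)
      with hCC
    set XX : Fin n → Fin n → (A ⊗[k] A) := fun i j => ∑ t : Fin n, x i t ⊗ₜ[k] x t j
      with hXX
    set CP : Fin n → Fin n → (A ⊗[k] A) := fun i j => ∑ s : Fin n, y s j ⊗ₜ[k] y i s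
      with hCP
    have hcomul_ite : ∀ (p : Prop) [Decidable p],
        Coalgebra.comul (R := k) (if p then (1:A) else 0)
          = if p then (1:A ⊗[k] A) else 0 := by
      intro p _
      split_ifs <;> simp
    have h3 : ∀ i j, (∑ s, XX i s * CC s j) = if i = j then (1:A ⊗[k] A) else 0 := by
      intro i j
      have h := congrArg (Coalgebra.comul (R := k)) (hy2 i j)
      rw [map_sum, hcomul_ite] at h
      rw [← h]
      refine Finset.sum_congr rfl fun s _ => ?_
      rw [Bialgebra.comul_mul, hcomul]
    have h4 : ∀ i j, (∑ s, CC i s * XX s j) = if i = j then (1:A ⊗[k] A) else 0 := by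
      intro i j
      have h := congrArg (Coalgebra.comul (R := k)) (hy1 i j)
      rw [map_sum, hcomul_ite] at h
      rw [← h]
      refine Finset.sum_congr rfl fun s _ => ?_
      rw [Bialgebra.comul_mul, hcomul]
    have h5 : ∀ i j, (∑ s, XX i s * CP s j) = if i = j then (1:A ⊗[k] A) else 0 := by
      intro i j
      have step : ∀ s, XX i s * CP s j
          = ∑ t : Fin n, ∑ u : Fin n, (x i t * y u j) ⊗ₜ[k] (x t s * y s u) := by
        intro s
        rw [hXX, hCP, Finset.sum_mul]
        refine Finset.sum_congr rfl fun t _ => ?_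
        rw [Finset.mul_sum]
        exact Finset.sum_congr rfl fun u _ => Algebra.TensorProduct.tmul_mul_tmul _ _ _ _
      rw [Finset.sum_congr rfl fun s _ => step s, Finset.sum_comm]
      have step2 : ∀ t : Fin n,
          (∑ s : Fin n, ∑ u : Fin n, (x i t * y u j) ⊗ₜ[k] (x t s * y s u))
          = (x i t * y t j) ⊗ₜ[k] (1:A) := by
        intro t
        rw [Finset.sum_comm]
        have : ∀ u : Fin n, (∑ s : Fin n, (x i t * y u j) ⊗ₜ[k] (x t s * y s u))
            = if t = u then (x i t * y u j) ⊗ₜ[k] (1:A) else 0 := by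
          intro u
          rw [← TensorProduct.tmul_sum, hy2 t u]
          split_ifs <;> simp
        rw [Finset.sum_congr rfl fun u _ => this u]
        rw [Finset.sum_ite_eq Finset.univ t fun u => (x i t * y u j) ⊗ₜ[k] (1:A)]
        simp
      rw [Finset.sum_congr rfl fun t _ => step2 t, ← TensorProduct.sum_tmul, hy2 i j]
      split_ifs <;> simp [Algebra.TensorProduct.one_def]
    have h6 : ∀ i j, (∑ s, CP i s * XX s j) = if i = j then (1:A ⊗[k] A) else 0 := by
      intro i j
      have step : ∀ s, CP i s * XX s j
          = ∑ u : Fin n, ∑ t : Fin n, (y u s * x s t) ⊗ₜ[k] (y i u * x t j) := by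
        intro s
        rw [hXX, hCP, Finset.sum_mul]
        refine Finset.sum_congr rfl fun u _ => ?_
        rw [Finset.mul_sum]
        exact Finset.sum_congr rfl fun t _ => Algebra.TensorProduct.tmul_mul_tmul _ _ _ _
      rw [Finset.sum_congr rfl fun s _ => step s, Finset.sum_comm]
      have step2 : ∀ u : Fin n,
          (∑ s : Fin n, ∑ t : Fin n, (y u s * x s t) ⊗ₜ[k] (y i u * x t j))
          = (1:A) ⊗ₜ[k] (y i u * x u j) := by
        intro u
        rw [Finset.sum_comm]
        have : ∀ t : Fin n, (∑ s : Fin n, (y u s * x s t) ⊗ₜ[k] (y i u * x t j))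
            = if u = t then (1:A) ⊗ₜ[k] (y i u * x t j) else 0 := by
          intro t
          rw [← TensorProduct.sum_tmul, hy1 u t]
          split_ifs <;> simp
        rw [Finset.sum_congr rfl fun t _ => this t]
        rw [Finset.sum_ite_eq Finset.univ u fun t => (1:A) ⊗ₜ[k] (y i u * x t j)]
        simp
      rw [Finset.sum_congr rfl fun u _ => step2 u, ← TensorProduct.tmul_sum, hy1 i j]
      split_ifs <;> simp [Algebra.TensorProduct.one_def]
    -- uniqueness of inverses: CC = CP
    intro i j
    have e0 : (∑ s : Fin n, (if i = s then (1:A ⊗[k] A) else 0) * CC s j) = CC i j := by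
      simp only [ite_mul, one_mul, zero_mul]
      rw [Finset.sum_ite_eq Finset.univ i fun s => CC s j]
      simp
    calc CC i j = ∑ s : Fin n, (if i = s then (1:A ⊗[k] A) else 0) * CC s j := e0.symm
      _ = ∑ s : Fin n, (∑ t : Fin n, CP i t * XX t s) * CC s j :=
          Finset.sum_congr rfl fun s _ => by rw [h6 i s]
      _ = ∑ s : Fin n, ∑ t : Fin n, CP i t * (XX t s * CC s j) := by
          refine Finset.sum_congr rfl fun s _ => ?_
          rw [Finset.sum_mul]
          exact Finset.sum_congr rfl fun t _ => mul_assoc _ _ _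
      _ = ∑ t : Fin n, CP i t * (∑ s : Fin n, XX t s * CC s j) := by
          rw [Finset.sum_comm]
          exact Finset.sum_congr rfl fun t _ => (Finset.mul_sum _ _ _).symm
      _ = ∑ t : Fin n, CP i t * (if t = j then (1:A ⊗[k] A) else 0) :=
          Finset.sum_congr rfl fun t _ => by rw [h3 t j]
      _ = CP i j := by
          simp only [mul_ite, mul_one, mul_zero]
          rw [Finset.sum_ite_eq' Finset.univ j fun t => CP i t]
          simp
  -- antipode axioms for the y's
  have hz2 : ∀ i j, (∑ s, y s j * z i s) = if i = j then (1:A) else 0 := by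
    intro i j
    have h := HopfAlgebra.mul_antipode_lTensor_comul_apply (R := k) (a := y i j)
    rw [hcomul_y, map_sum, hcy] at h
    simp only [LinearMap.lTensor_tmul, map_sum, LinearMap.mul'_apply] at h
    rw [hz]
    rw [h]
    split_ifs <;> simp
  -- the key quantum trace identity
  have hK := qtK hα hβ x y hy1 hy2 hrel
  set q := α * β⁻¹ with hq
  have hq0 : q ≠ 0 := mul_ne_zero hα (inv_ne_zero hβ)
  intro i j
  -- the double sum W
  have ev1 : (∑ s : Fin n, ∑ h : Fin n, q ^ (h : ℕ) • (x h j * (y s h * z i s)))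
      = q ^ (i : ℕ) • x i j := by
    rw [Finset.sum_comm]
    have step : ∀ h : Fin n, (∑ s : Fin n, q ^ (h : ℕ) • (x h j * (y s h * z i s)))
        = q ^ (h : ℕ) • (x h j * (if i = h then (1:A) else 0)) := by
      intro h
      rw [← hz2 i h, ← Finset.smul_sum, ← Finset.mul_sum]
    rw [Finset.sum_congr rfl fun h _ => step h]
    simp only [mul_ite, mul_one, mul_zero, smul_ite, smul_zero]
    rw [Finset.sum_ite_eq Finset.univ i fun h => q ^ (h : ℕ) • x h j]
    simp
  have ev2 : (∑ s : Fin n, ∑ h : Fin n, q ^ (h : ℕ) • (x h j * (y s h * z i s)))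
      = q ^ (j : ℕ) • z i j := by
    have step : ∀ s : Fin n, (∑ h : Fin n, q ^ (h : ℕ) • (x h j * (y s h * z i s)))
        = (if s = j then q ^ (j : ℕ) • (1:A) else 0) * z i s := by
      intro s
      rw [← hK s j, Finset.sum_mul]
      refine Finset.sum_congr rfl fun h _ => ?_
      rw [smul_mul_assoc, mul_assoc]
    rw [Finset.sum_congr rfl fun s _ => step s]
    simp only [ite_mul, zero_mul, smul_mul_assoc, one_mul]
    rw [Finset.sum_ite_eq' Finset.univ j fun s => q ^ (j : ℕ) • z i s]
    simp
  have main : q ^ (j : ℕ) • z i j = q ^ (i : ℕ) • x i j := ev2.symm.trans ev1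
  have main2 : z i j = ((q ^ (j : ℕ))⁻¹ * q ^ (i : ℕ)) • x i j := by
    have := congrArg (fun v => (q ^ (j : ℕ))⁻¹ • v) main
    simpa [smul_smul, inv_mul_cancel₀ (pow_ne_zero _ hq0)] using this
  have hsc : ((α⁻¹ * β) ^ (((j : ℕ) : ℤ) - ((i : ℕ) : ℤ)))
      = (q ^ (j : ℕ))⁻¹ * q ^ (i : ℕ) := by
    have hinv : α⁻¹ * β = q⁻¹ := by
      rw [hq, mul_inv, inv_inv]
    rw [hinv, inv_zpow, ← zpow_neg, neg_sub, zpow_sub₀ hq0, zpow_natCast, zpow_natCast]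
    ring
  rw [hsc]
  exact main2

end
end

section
/- For all 1 ≤ i,j ≤ n and 1 ≤ l ≤ k < n: ⟨E_{k,l}, x_{ij}⟩ = (−1)^{k−l} α^{l−k} δ_{l,i} δ_{k+1,j} and ⟨F_{k,l}, x_{ij}⟩ = δ_{k+1,i} δ_{l,j}. -/
open scoped TensorProduct

noncomputable section

universe u v

/-- The defining relations of the two-parameter quantized enveloping algebra
`U_{α,β}(gl_n)`, for families `a i, b i` (with inverses `ai i, bi i`, `1 ≤ i ≤ n`)
and `e j, f j` (`1 ≤ j < n`) of elements of a `k`-algebra `U`. -/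
structure UglRel {k : Type u} [Field k] {U : Type v} [Ring U] [Algebra k U]
    (n : ℕ) (α β : k) (a ai b bi e f : ℕ → U) : Prop where
  comm_aa : ∀ i j, a i * a j = a j * a i
  comm_ab : ∀ i j, a i * b j = b j * a i
  comm_bb : ∀ i j, b i * b j = b j * b i
  inv_a : ∀ i, 1 ≤ i → i ≤ n → a i * ai i = 1 ∧ ai i * a i = 1
  inv_b : ∀ i, 1 ≤ i → i ≤ n → b i * bi i = 1 ∧ bi i * b i = 1
  rel_ae : ∀ i j, 1 ≤ i → i ≤ n → 1 ≤ j → j < n →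
    a i * e j = (if i = j then α else if i = j + 1 then α⁻¹ else 1) • (e j * a i)
  rel_be : ∀ i j, 1 ≤ i → i ≤ n → 1 ≤ j → j < n →
    b i * e j = (if i = j then β else if i = j + 1 then β⁻¹ else 1) • (e j * b i)
  rel_af : ∀ i j, 1 ≤ i → i ≤ n → 1 ≤ j → j < n →
    a i * f j = (if i = j then α⁻¹ else if i = j + 1 then α else 1) • (f j * a i)
  rel_bf : ∀ i j, 1 ≤ i → i ≤ n → 1 ≤ j → j < n →
    b i * f j = (if i = j then β⁻¹ else if i = j + 1 then β else 1) • (f j * b i)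
  rel_ef : ∀ j l, 1 ≤ j → j < n → 1 ≤ l → l < n →
    e j * f l - f l * e j =
      if j = l then (α - β)⁻¹ • (a j * b (j + 1) - a (j + 1) * b j) else 0
  rel_ee : ∀ j l, 1 ≤ j → j < n → 1 ≤ l → l < n → j + 1 < l → e j * e l = e l * e j
  rel_ff : ∀ j l, 1 ≤ j → j < n → 1 ≤ l → l < n → j + 1 < l → f j * f l = f l * f j
  serre_e1 : ∀ j, 1 ≤ j → j + 1 < n →
    e j ^ 2 * e (j + 1) - (α + β) • (e j * e (j + 1) * e j)
      + (α * β) • (e (j + 1) * e j ^ 2) = 0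
  serre_e2 : ∀ j, 1 ≤ j → j + 1 < n →
    e j * e (j + 1) ^ 2 - (α + β) • (e (j + 1) * e j * e (j + 1))
      + (α * β) • (e (j + 1) ^ 2 * e j) = 0
  serre_f1 : ∀ j, 1 ≤ j → j + 1 < n →
    f j ^ 2 * f (j + 1) - (α⁻¹ + β⁻¹) • (f j * f (j + 1) * f j)
      + (α⁻¹ * β⁻¹) • (f (j + 1) * f j ^ 2) = 0
  serre_f2 : ∀ j, 1 ≤ j → j + 1 < n →
    f j * f (j + 1) ^ 2 - (α⁻¹ + β⁻¹) • (f (j + 1) * f j * f (j + 1))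
      + (α⁻¹ * β⁻¹) • (f (j + 1) ^ 2 * f j) = 0

/-- Auxiliary recursion for the root vectors: `EvecAux α e l d = E_{l+d, l}`. -/
def EvecAux {k : Type u} [Field k] {U : Type v} [Ring U] [Algebra k U]
    (α : k) (e : ℕ → U) (l : ℕ) : ℕ → U
  | 0 => e l
  | d + 1 => e (l + d + 1) * EvecAux α e l d - α⁻¹ • (EvecAux α e l d * e (l + d + 1))

/-- The root vector `E_{kk,l} = [e_{kk}, E_{kk-1,l}]_{α⁻¹}` (with `E_{l,l} = e_l`). -/
def Eroot {k : Type u} [Field k] {U : Type v} [Ring U] [Algebra k U]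
    (α : k) (e : ℕ → U) (kk l : ℕ) : U :=
  EvecAux α e l (kk - l)

/-- Auxiliary recursion for the root vectors: `FvecAux β f l d = F_{l+d, l}`. -/
def FvecAux {k : Type u} [Field k] {U : Type v} [Ring U] [Algebra k U]
    (β : k) (f : ℕ → U) (l : ℕ) : ℕ → U
  | 0 => f l
  | d + 1 => f (l + d + 1) * FvecAux β f l d - β⁻¹ • (FvecAux β f l d * f (l + d + 1))

/-- The root vector `F_{kk,l} = [f_{kk}, F_{kk-1,l}]_{β⁻¹}` (with `F_{l,l} = f_l`). -/
def Froot {k : Type u} [Field k] {U : Type v} [Ring U] [Algebra k U]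
    (β : k) (f : ℕ → U) (kk l : ℕ) : U :=
  FvecAux β f l (kk - l)

/-- The comultiplication and counit of `U_{α,β}(gl_n)` on the generators:
`a_i, b_i` (and their inverses) are group-like, `e_j` is `(w_j,1)`-primitive and
`f_j` is `(1,w_j')`-primitive, where `w_j = a_j b_{j+1}` and `w_j' = a_{j+1} b_j`. -/
structure UglComul (k : Type u) [Field k] {U : Type v} [Ring U] [Bialgebra k U]
    (n : ℕ) (a ai b bi e f : ℕ → U) : Prop where
  com_a : ∀ i, 1 ≤ i → i ≤ n → Coalgebra.comul (R := k) (a i) = a i ⊗ₜ[k] a i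
  com_ai : ∀ i, 1 ≤ i → i ≤ n → Coalgebra.comul (R := k) (ai i) = ai i ⊗ₜ[k] ai i
  com_b : ∀ i, 1 ≤ i → i ≤ n → Coalgebra.comul (R := k) (b i) = b i ⊗ₜ[k] b i
  com_bi : ∀ i, 1 ≤ i → i ≤ n → Coalgebra.comul (R := k) (bi i) = bi i ⊗ₜ[k] bi i
  cou_a : ∀ i, 1 ≤ i → i ≤ n → Coalgebra.counit (R := k) (a i) = (1 : k)
  cou_ai : ∀ i, 1 ≤ i → i ≤ n → Coalgebra.counit (R := k) (ai i) = (1 : k)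
  cou_b : ∀ i, 1 ≤ i → i ≤ n → Coalgebra.counit (R := k) (b i) = (1 : k)
  cou_bi : ∀ i, 1 ≤ i → i ≤ n → Coalgebra.counit (R := k) (bi i) = (1 : k)
  com_e : ∀ j, 1 ≤ j → j < n →
    Coalgebra.comul (R := k) (e j) = e j ⊗ₜ[k] 1 + (a j * b (j + 1)) ⊗ₜ[k] e j
  com_f : ∀ j, 1 ≤ j → j < n →
    Coalgebra.comul (R := k) (f j) = 1 ⊗ₜ[k] f j + f j ⊗ₜ[k] (a (j + 1) * b j)
  cou_e : ∀ j, 1 ≤ j → j < n → Coalgebra.counit (R := k) (e j) = 0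
  cou_f : ∀ j, 1 ≤ j → j < n → Coalgebra.counit (R := k) (f j) = 0

/-- A Hopf pairing `⟨-,-⟩ : U × O → k` between two bialgebras, in elementwise form:
`⟨uv, x⟩ = ∑ ⟨u, x₍₁₎⟩⟨v, x₍₂₎⟩`, `⟨u, xy⟩ = ∑ ⟨u₍₁₎, x⟩⟨u₍₂₎, y⟩`, `⟨1, x⟩ = ε(x)`,
`⟨u, 1⟩ = ε(u)`. -/
structure IsHopfPairing {k : Type u} [Field k] {U O : Type v}
    [Ring U] [Bialgebra k U] [Ring O] [Bialgebra k O]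
    (pair : U →ₗ[k] O →ₗ[k] k) : Prop where
  pair_mul_left : ∀ (u v : U) (z : O) (m : ℕ) (y y' : Fin m → O),
    Coalgebra.comul (R := k) z = ∑ s, y s ⊗ₜ[k] y' s →
    pair (u * v) z = ∑ s, pair u (y s) * pair v (y' s)
  pair_mul_right : ∀ (u : U) (z w : O) (m : ℕ) (p q : Fin m → U),
    Coalgebra.comul (R := k) u = ∑ s, p s ⊗ₜ[k] q s →
    pair u (z * w) = ∑ s, pair (p s) z * pair (q s) w
  pair_one_left : ∀ z : O, pair 1 z = Coalgebra.counit (R := k) z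
  pair_one_right : ∀ u : U, pair u 1 = Coalgebra.counit (R := k) u

/-- The values of the Hopf pairing between `U_{α,β}(gl_n)` and `O_{α,β}(GL_n)`
on the generators. -/
structure PairVals {k : Type u} [Field k] {U O : Type v}
    [Ring U] [Algebra k U] [Ring O] [Algebra k O]
    (n : ℕ) (α β : k) (a ai b bi e f : ℕ → U) (x : ℕ → ℕ → O)
    (pair : U →ₗ[k] O →ₗ[k] k) : Prop where
  val_a : ∀ i s t, 1 ≤ i → i ≤ n → 1 ≤ s → s ≤ n → 1 ≤ t → t ≤ n →
    pair (a i) (x s t) = if s = t then (if i = s then α else 1) else 0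
  val_ai : ∀ i s t, 1 ≤ i → i ≤ n → 1 ≤ s → s ≤ n → 1 ≤ t → t ≤ n →
    pair (ai i) (x s t) = if s = t then (if i = s then α⁻¹ else 1) else 0
  val_b : ∀ i s t, 1 ≤ i → i ≤ n → 1 ≤ s → s ≤ n → 1 ≤ t → t ≤ n →
    pair (b i) (x s t) = if s = t then (if i = s then β else 1) else 0
  val_bi : ∀ i s t, 1 ≤ i → i ≤ n → 1 ≤ s → s ≤ n → 1 ≤ t → t ≤ n →
    pair (bi i) (x s t) = if s = t then (if i = s then β⁻¹ else 1) else 0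
  val_e : ∀ j s t, 1 ≤ j → j < n → 1 ≤ s → s ≤ n → 1 ≤ t → t ≤ n →
    pair (e j) (x s t) = if j = s ∧ t = j + 1 then 1 else 0
  val_f : ∀ j s t, 1 ≤ j → j < n → 1 ≤ s → s ≤ n → 1 ≤ t → t ≤ n →
    pair (f j) (x s t) = if s = j + 1 ∧ t = j then 1 else 0

/-- The defining relations of `O_{α,β}(M_n)` for a family `x i j` (`1 ≤ i,j ≤ n`)
indexed by natural numbers. -/
def QMRelN {k : Type u} [Field k] {O : Type v} [Ring O] [Algebra k O]
    (n : ℕ) (α β : k) (x : ℕ → ℕ → O) : Prop :=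
  (∀ i j l, 1 ≤ i → i ≤ n → 1 ≤ j → 1 ≤ l → l ≤ n → j < l →
    x i l * x i j = α⁻¹ • (x i j * x i l)) ∧
  (∀ i j l, 1 ≤ i → 1 ≤ j → j ≤ n → 1 ≤ l → l ≤ n → i < j →
    x j l * x i l = β • (x i l * x j l)) ∧
  (∀ i j l m, 1 ≤ i → 1 ≤ j → j ≤ n → 1 ≤ l → 1 ≤ m → m ≤ n → i < j → l < m →
    x j l * x i m = (β * α) • (x i m * x j l)) ∧
  (∀ i j l m, 1 ≤ i → 1 ≤ j → j ≤ n → 1 ≤ l → 1 ≤ m → m ≤ n → i < j → l < m →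
    x j m * x i l - x i l * x j m = (β - α) • (x i m * x j l))

/-- The comultiplication and counit of `O_{α,β}(M_n)` on the generators,
for a family indexed by natural numbers. -/
def OComulN (k : Type u) [Field k] {O : Type v} [Ring O] [Bialgebra k O]
    (n : ℕ) (x : ℕ → ℕ → O) : Prop :=
  (∀ i j, 1 ≤ i → i ≤ n → 1 ≤ j → j ≤ n →
    Coalgebra.comul (R := k) (x i j) = ∑ s ∈ Finset.Icc 1 n, x i s ⊗ₜ[k] x s j) ∧
  (∀ i j, 1 ≤ i → i ≤ n → 1 ≤ j → j ≤ n →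
    Coalgebra.counit (R := k) (x i j) = if i = j then (1 : k) else 0)

/-!
Pairing with the generators `x_{ij}` gives a representation `u ↦ (⟨u, x_{ij}⟩)_{ij}` of `U` by
`n × n` matrices: it is multiplicative because `Δ x_{ij} = ∑ₛ x_{is} ⊗ x_{sj}`. It sends `e_j`
and `f_j` to the matrix units `E_{j,j+1}` and `E_{j+1,j}`, so the `q`-commutators defining the
root vectors are computed with matrix units: `E_{k,l} ↦ (-α⁻¹)^{k-l} E_{l,k+1}` and
`F_{k,l} ↦ E_{k+1,l}`.
-/

open Matrix

section

variable {k : Type u} [Field k] {U O : Type v} [Ring U] [Bialgebra k U] [Ring O] [Bialgebra k O]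
  {pair : U →ₗ[k] O →ₗ[k] k}

theorem Finset.sum_comp_equivFin_symm {ι M : Type*} [AddCommMonoid M] (S : Finset ι)
    (F : ι → M) : ∑ t, F (S.equivFin.symm t) = ∑ s ∈ S, F s :=
  (S.equivFin.symm.sum_comp fun s : S => F s).trans (S.sum_coe_sort F)

theorem IsHopfPairing.pair_mul_eq_finset_sum (hpair : IsHopfPairing pair) {ι : Type*}
    (u v : U) (z : O) (S : Finset ι) (y y' : ι → O)
    (hz : Coalgebra.comul (R := k) z = ∑ s ∈ S, y s ⊗ₜ[k] y' s) :
    pair (u * v) z = ∑ s ∈ S, pair u (y s) * pair v (y' s) := by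
  let g (t : Fin S.card) : ι := S.equivFin.symm t
  rw [hpair.pair_mul_left u v z S.card (y ∘ g) (y' ∘ g)
    (hz.trans (S.sum_comp_equivFin_symm fun s => y s ⊗ₜ[k] y' s).symm)]
  exact S.sum_comp_equivFin_symm fun s => pair u (y s) * pair v (y' s)

variable (pair) (n : ℕ) (x : ℕ → ℕ → O)

def pairingMatrix : U →ₗ[k] Matrix (Finset.Icc 1 n) (Finset.Icc 1 n) k where
  toFun u := Matrix.of fun i j => pair u (x i j)
  map_add' u v := by ext; simp
  map_smul' c u := by ext; simp

variable {pair n x}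

theorem pairingMatrix_apply (u : U) (i j : Finset.Icc 1 n) :
    pairingMatrix pair n x u i j = pair u (x i j) := rfl

theorem pairingMatrix_mul (hpair : IsHopfPairing pair) (hcom : OComulN k n x) (u v : U) :
    pairingMatrix pair n x (u * v) = pairingMatrix pair n x u * pairingMatrix pair n x v := by
  ext ⟨i, hi⟩ ⟨j, hj⟩
  rw [Finset.mem_Icc] at hi hj
  simp only [mul_apply, pairingMatrix_apply]
  rw [Finset.sum_coe_sort (Finset.Icc 1 n) (fun s => pair u (x i s) * pair v (x s j))]
  exact hpair.pair_mul_eq_finset_sum u v _ _ _ _ (hcom.1 i j hi.1 hi.2 hj.1 hj.2)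

theorem mem_Icc_one_of_lt {j n : ℕ} (h1 : 1 ≤ j) (hj : j < n) : j ∈ Finset.Icc 1 n :=
  Finset.mem_Icc.2 ⟨h1, hj.le⟩

theorem succ_mem_Icc_one_of_lt {j n : ℕ} (hj : j < n) : j + 1 ∈ Finset.Icc 1 n :=
  Finset.mem_Icc.2 ⟨Nat.le_add_left 1 j, hj⟩

variable {α β : k} {a ai b bi e f : ℕ → U}

theorem pairingMatrix_e (hvals : PairVals n α β a ai b bi e f x pair) {j : ℕ} (h1 : 1 ≤ j)
    (hj : j < n) :
    pairingMatrix pair n x (e j) =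
      single ⟨j, mem_Icc_one_of_lt h1 hj⟩ ⟨j + 1, succ_mem_Icc_one_of_lt hj⟩ 1 := by
  ext ⟨s, hs⟩ ⟨t, ht⟩
  rw [Finset.mem_Icc] at hs ht
  rw [pairingMatrix_apply, hvals.val_e j s t h1 hj hs.1 hs.2 ht.1 ht.2, single_apply]
  simp only [Subtype.mk.injEq, eq_comm (a := j + 1)]

theorem pairingMatrix_f (hvals : PairVals n α β a ai b bi e f x pair) {j : ℕ} (h1 : 1 ≤ j)
    (hj : j < n) :
    pairingMatrix pair n x (f j) =
      single ⟨j + 1, succ_mem_Icc_one_of_lt hj⟩ ⟨j, mem_Icc_one_of_lt h1 hj⟩ 1 := by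
  ext ⟨s, hs⟩ ⟨t, ht⟩
  rw [Finset.mem_Icc] at hs ht
  rw [pairingMatrix_apply, hvals.val_f j s t h1 hj hs.1 hs.2 ht.1 ht.2, single_apply]
  simp only [Subtype.mk.injEq, eq_comm (a := j + 1), eq_comm (a := j)]

theorem pairingMatrix_evecAux (hpair : IsHopfPairing pair) (hcom : OComulN k n x)
    (hvals : PairVals n α β a ai b bi e f x pair) {l : ℕ} (hl : 1 ≤ l) :
    ∀ {d : ℕ} (hd : l + d < n), pairingMatrix pair n x (EvecAux α e l d) =
      (-α⁻¹) ^ d •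
        single ⟨l, mem_Icc_one_of_lt hl (by omega)⟩ ⟨l + d + 1, succ_mem_Icc_one_of_lt hd⟩ 1
  | 0, hd => by simpa [EvecAux] using pairingMatrix_e hvals hl hd
  | d + 1, hd => by
    have hd' : l + d < n := by omega
    have hne : (⟨l + d + 1 + 1, succ_mem_Icc_one_of_lt hd⟩ : Finset.Icc 1 n) ≠
        ⟨l, mem_Icc_one_of_lt hl (by omega)⟩ := by
      simp only [ne_eq, Subtype.mk.injEq]; omega
    rw [EvecAux, map_sub, map_smul, pairingMatrix_mul hpair hcom, pairingMatrix_mul hpair hcom,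
      pairingMatrix_evecAux hpair hcom hvals hl hd',
      pairingMatrix_e hvals (by omega) (show l + d + 1 < n by omega)]
    simp only [Matrix.mul_smul, Matrix.smul_mul, single_mul_single_same,
      single_mul_single_of_ne (c := (1 : k)) _ _ _ hne, smul_zero, zero_sub, smul_smul, pow_succ]
    rw [mul_one, ← neg_smul]
    congr 1
    ring

theorem pairingMatrix_fvecAux (hpair : IsHopfPairing pair) (hcom : OComulN k n x)
    (hvals : PairVals n α β a ai b bi e f x pair) {l : ℕ} (hl : 1 ≤ l) :
    ∀ {d : ℕ} (hd : l + d < n), pairingMatrix pair n x (FvecAux β f l d) =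
      single ⟨l + d + 1, succ_mem_Icc_one_of_lt hd⟩ ⟨l, mem_Icc_one_of_lt hl (by omega)⟩ 1
  | 0, hd => by simpa [FvecAux] using pairingMatrix_f hvals hl hd
  | d + 1, hd => by
    have hd' : l + d < n := by omega
    have hne : (⟨l, mem_Icc_one_of_lt hl (by omega)⟩ : Finset.Icc 1 n) ≠
        ⟨l + d + 1 + 1, succ_mem_Icc_one_of_lt hd⟩ := by
      simp only [ne_eq, Subtype.mk.injEq]; omega
    rw [FvecAux, map_sub, map_smul, pairingMatrix_mul hpair hcom, pairingMatrix_mul hpair hcom,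
      pairingMatrix_fvecAux hpair hcom hvals hl hd',
      pairingMatrix_f hvals (by omega) (show l + d + 1 < n by omega)]
    simp only [single_mul_single_same, single_mul_single_of_ne (c := (1 : k)) _ _ _ hne,
      smul_zero, sub_zero, mul_one]
    rfl

end

theorem pairing_root_vectors_general
    {k : Type u} [Field k]
    {U O : Type v} [Ring U] [Bialgebra k U] [Ring O] [Bialgebra k O]
    (n : ℕ) (α β : k)
    (a ai b bi e f : ℕ → U) (x : ℕ → ℕ → O)
    (hOcom : OComulN k n x)
    (pair : U →ₗ[k] O →ₗ[k] k)
    (hpair : IsHopfPairing pair)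
    (hvals : PairVals n α β a ai b bi e f x pair) :
    ∀ i j l kk, 1 ≤ i → i ≤ n → 1 ≤ j → j ≤ n → 1 ≤ l → l ≤ kk → kk < n →
      pair (Eroot α e kk l) (x i j) =
        (if l = i ∧ kk + 1 = j then (-1 : k) ^ (kk - l) * α⁻¹ ^ (kk - l) else 0) ∧
      pair (Froot β f kk l) (x i j) = (if kk + 1 = i ∧ l = j then 1 else 0) := by
  intro i j l kk hi1 hin hj1 hjn hl hlk hkn
  obtain ⟨d, rfl⟩ : ∃ d, kk = l + d := ⟨kk - l, by omega⟩
  have hi : i ∈ Finset.Icc 1 n := Finset.mem_Icc.2 ⟨hi1, hin⟩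
  have hj : j ∈ Finset.Icc 1 n := Finset.mem_Icc.2 ⟨hj1, hjn⟩
  rw [Eroot, Froot, Nat.add_sub_cancel_left, ← neg_pow]
  constructor
  · change pairingMatrix pair n x _ ⟨i, hi⟩ ⟨j, hj⟩ = _
    rw [pairingMatrix_evecAux hpair hOcom hvals hl hkn, Matrix.smul_apply, single_apply]
    simp only [Subtype.mk.injEq, smul_eq_mul, mul_ite, mul_one, mul_zero]
  · change pairingMatrix pair n x _ ⟨i, hi⟩ ⟨j, hj⟩ = _
    rw [pairingMatrix_fvecAux hpair hOcom hvals hl hkn, single_apply]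
    simp only [Subtype.mk.injEq]

/-- the values of the Hopf pairing on the root vectors:
`⟨E_{kk,l}, x_{ij}⟩ = (-1)^{kk-l} α^{l-kk} δ_{l,i} δ_{kk+1,j}` and
`⟨F_{kk,l}, x_{ij}⟩ = δ_{kk+1,i} δ_{l,j}`. -/
theorem pairing_root_vectors
    {k : Type u} [Field k] [IsAlgClosed k] [CharZero k]
    {U O : Type v} [Ring U] [Bialgebra k U] [Ring O] [Bialgebra k O]
    (n : ℕ) (hn : 0 < n) (α β : k) (hα : α ≠ 0) (hβ : β ≠ 0) (hαβ : α ≠ β)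
    (a ai b bi e f : ℕ → U) (x : ℕ → ℕ → O)
    (hUrel : UglRel n α β a ai b bi e f) (hUcom : UglComul k n a ai b bi e f)
    (hOrel : QMRelN n α β x) (hOcom : OComulN k n x)
    (pair : U →ₗ[k] O →ₗ[k] k)
    (hpair : IsHopfPairing pair)
    (hvals : PairVals n α β a ai b bi e f x pair) :
    ∀ i j l kk, 1 ≤ i → i ≤ n → 1 ≤ j → j ≤ n → 1 ≤ l → l ≤ kk → kk < n →
      pair (Eroot α e kk l) (x i j) =
        (if l = i ∧ kk + 1 = j then (-1 : k) ^ (kk - l) * α⁻¹ ^ (kk - l) else 0) ∧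
      pair (Froot β f kk l) (x i j) = (if kk + 1 = i ∧ l = j then 1 else 0) :=
  pairing_root_vectors_general n α β a ai b bi e f x hOcom pair hpair hvals
end
end

section
/- For every generator u ∈ {a_i^{±1}, b_i^{±1} : 1 ≤ i ≤ n} ∪ {e_j, f_j : 1 ≤ j < n} of U_{α,β}(gl_n) and all 1 ≤ s,t ≤ n, one has ⟨u, x_{st}^ℓ⟩ = δ_{st} ε(u); explicitly ⟨a_i, x_{st}^ℓ⟩ = δ_{st} = ⟨b_i, x_{st}^ℓ⟩ and ⟨e_j, x_{st}^ℓ⟩ = 0 = ⟨f_j, x_{st}^ℓ⟩. -/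
open scoped TensorProduct

noncomputable section

universe u v

/-! A group-like element pairs multiplicatively, so `⟨a_i, x_{st}^ℓ⟩ = ⟨a_i, x_{st}⟩^ℓ`, which is
`δ_{st} α^ℓ` or `δ_{st}` (similarly for `a_i⁻¹, b_i^{±1}`). A `(h, g)`-skew-primitive element `u`
(`Δ u = u ⊗ g + h ⊗ u`, `ε u = 0`) satisfies the geometric-sum identity
`⟨u, z^m⟩ = ⟨u, z⟩ ∑_{i<m} ⟨h, z⟩^i ⟨g, z⟩^{m-1-i}`. For `u = e_j, f_j` and `z = x_{st}` this
vanishes for `m ≥ 2`: on the diagonal because `⟨e_j, x_{ss}⟩ = ⟨f_j, x_{ss}⟩ = 0`, off the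
diagonal because there `ε(x_{st}) = 0 = ⟨a_p b_q, x_{st}⟩`, so every summand has a zero factor. -/

namespace IsHopfPairing

variable {k : Type u} [Field k] {U O : Type v} [Ring U] [Bialgebra k U] [Ring O] [Bialgebra k O]
  {pair : U →ₗ[k] O →ₗ[k] k}

theorem map_mul_left_of_comul_eq_sum (hp : IsHopfPairing pair) (u v : U) {z : O} {ι : Type*}
    (S : Finset ι) (y y' : ι → O) (hz : Coalgebra.comul (R := k) z = ∑ s ∈ S, y s ⊗ₜ[k] y' s) :
    pair (u * v) z = ∑ s ∈ S, pair u (y s) * pair v (y' s) := by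
  rw [← Finset.sum_coe_sort S, ← S.equivFin.symm.sum_comp] at hz
  rw [hp.pair_mul_left u v z _ _ _ hz, ← Finset.sum_coe_sort S, ← S.equivFin.symm.sum_comp]

theorem map_mul_of_comul_eq_add (hp : IsHopfPairing pair) {u p q p' q' : U}
    (hu : Coalgebra.comul (R := k) u = p ⊗ₜ[k] q + p' ⊗ₜ[k] q') (z w : O) :
    pair u (z * w) = pair p z * pair q w + pair p' z * pair q' w := by
  simpa [Fin.sum_univ_two] using
    hp.pair_mul_right u z w 2 ![p, p'] ![q, q'] (by simpa [Fin.sum_univ_two] using hu)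

theorem map_mul_of_isGroupLikeElem (hp : IsHopfPairing pair) {g : U} (hg : IsGroupLikeElem k g)
    (z w : O) : pair g (z * w) = pair g z * pair g w := by
  simpa using hp.pair_mul_right g z w 1 ![g] ![g] (by simp [hg.comul_eq_tmul_self])

theorem map_pow_of_isGroupLikeElem (hp : IsHopfPairing pair) {g : U} (hg : IsGroupLikeElem k g)
    (z : O) (m : ℕ) : pair g (z ^ m) = pair g z ^ m := by
  induction m with
  | zero => simp [hp.pair_one_right, hg.counit_eq_one]
  | succ m ih => rw [pow_succ, hp.map_mul_of_isGroupLikeElem hg, ih, pow_succ]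

theorem map_pow_of_comul_eq_tmul_add_tmul (hp : IsHopfPairing pair) {u g h : U}
    (hu : Coalgebra.comul (R := k) u = u ⊗ₜ[k] g + h ⊗ₜ[k] u)
    (hεu : Coalgebra.counit (R := k) u = 0) (hh : IsGroupLikeElem k h) (z : O) (m : ℕ) :
    pair u (z ^ m) = pair u z * ∑ i ∈ Finset.range m, pair h z ^ i * pair g z ^ (m - 1 - i) := by
  induction m with
  | zero => simp [hp.pair_one_right, hεu]
  | succ m ih =>
    rw [pow_succ, hp.map_mul_of_comul_eq_add hu, ih, hp.map_pow_of_isGroupLikeElem hh,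
      Nat.add_sub_cancel, geom_sum₂_succ_eq]
    ring

theorem map_pow_eq_zero_of_comul_eq_tmul_add_tmul (hp : IsHopfPairing pair) {u g h : U}
    (hu : Coalgebra.comul (R := k) u = u ⊗ₜ[k] g + h ⊗ₜ[k] u)
    (hεu : Coalgebra.counit (R := k) u = 0) (hh : IsGroupLikeElem k h) {z : O} {m : ℕ}
    (hm : 2 ≤ m) (hz : pair u z = 0 ∨ pair g z = 0 ∧ pair h z = 0) : pair u (z ^ m) = 0 := by
  rw [hp.map_pow_of_comul_eq_tmul_add_tmul hu hεu hh]
  rcases hz with hz | ⟨hgz, hhz⟩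
  · rw [hz, zero_mul]
  · rw [hgz, hhz, geom_sum₂_self, zero_pow (by omega), mul_zero, mul_zero]

end IsHopfPairing

section GLPairing

variable {k : Type u} [Field k] {U O : Type v} [Ring U] [Bialgebra k U] [Ring O] [Bialgebra k O]
  {n : ℕ} {α β : k} {a ai b bi e f : ℕ → U} {x : ℕ → ℕ → O} {pair : U →ₗ[k] O →ₗ[k] k}

namespace UglComul

theorem isGroupLikeElem_a (hUcom : UglComul k n a ai b bi e f) {i : ℕ} (hi : 1 ≤ i)
    (hin : i ≤ n) : IsGroupLikeElem k (a i) :=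
  ⟨hUcom.cou_a i hi hin, hUcom.com_a i hi hin⟩

theorem isGroupLikeElem_ai (hUcom : UglComul k n a ai b bi e f) {i : ℕ} (hi : 1 ≤ i)
    (hin : i ≤ n) : IsGroupLikeElem k (ai i) :=
  ⟨hUcom.cou_ai i hi hin, hUcom.com_ai i hi hin⟩

theorem isGroupLikeElem_b (hUcom : UglComul k n a ai b bi e f) {i : ℕ} (hi : 1 ≤ i)
    (hin : i ≤ n) : IsGroupLikeElem k (b i) :=
  ⟨hUcom.cou_b i hi hin, hUcom.com_b i hi hin⟩

theorem isGroupLikeElem_bi (hUcom : UglComul k n a ai b bi e f) {i : ℕ} (hi : 1 ≤ i)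
    (hin : i ≤ n) : IsGroupLikeElem k (bi i) :=
  ⟨hUcom.cou_bi i hi hin, hUcom.com_bi i hi hin⟩

end UglComul

theorem ite_ite_pow_of_pow_eq_one {c : k} {ℓ : ℕ} (hℓ : ℓ ≠ 0) (hc : c ^ ℓ = 1) (s t i : ℕ) :
    (if s = t then (if i = s then c else 1) else 0) ^ ℓ = if s = t then 1 else 0 := by
  split_ifs <;> simp [hc, hℓ]

theorem PairVals.pair_a_mul_b_of_ne (hp : IsHopfPairing pair) (hOcom : OComulN k n x)
    (hvals : PairVals n α β a ai b bi e f x pair) {p q s t : ℕ} (hp1 : 1 ≤ p) (hpn : p ≤ n)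
    (hq1 : 1 ≤ q) (hqn : q ≤ n) (hs1 : 1 ≤ s) (hsn : s ≤ n) (ht1 : 1 ≤ t) (htn : t ≤ n)
    (hst : s ≠ t) : pair (a p * b q) (x s t) = 0 := by
  rw [hp.map_mul_left_of_comul_eq_sum _ _ _ _ _ (hOcom.1 s t hs1 hsn ht1 htn)]
  refine Finset.sum_eq_zero fun r hr => ?_
  obtain ⟨hr1, hrn⟩ := Finset.mem_Icc.mp hr
  rw [hvals.val_a p s r hp1 hpn hs1 hsn hr1 hrn, hvals.val_b q r t hq1 hqn hr1 hrn ht1 htn]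
  by_cases hsr : s = r
  · rw [if_neg (by omega : r ≠ t), mul_zero]
  · rw [if_neg hsr, zero_mul]

theorem PairVals.pair_e_pow_eq_zero (hp : IsHopfPairing pair) (hUcom : UglComul k n a ai b bi e f)
    (hOcom : OComulN k n x) (hvals : PairVals n α β a ai b bi e f x pair) {j s t m : ℕ}
    (hj1 : 1 ≤ j) (hjn : j < n) (hs1 : 1 ≤ s) (hsn : s ≤ n) (ht1 : 1 ≤ t) (htn : t ≤ n)
    (hm : 2 ≤ m) : pair (e j) (x s t ^ m) = 0 := by
  refine hp.map_pow_eq_zero_of_comul_eq_tmul_add_tmul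
    (hUcom.com_e j hj1 hjn) (hUcom.cou_e j hj1 hjn)
    ((hUcom.isGroupLikeElem_a hj1 hjn.le).mul (hUcom.isGroupLikeElem_b (by omega) hjn)) hm ?_
  by_cases hst : s = t
  · left
    rw [hvals.val_e j s t hj1 hjn hs1 hsn ht1 htn, if_neg (by omega)]
  · right
    exact ⟨by rw [hp.pair_one_left, hOcom.2 s t hs1 hsn ht1 htn, if_neg hst],
      hvals.pair_a_mul_b_of_ne hp hOcom hj1 hjn.le (by omega) hjn hs1 hsn ht1 htn hst⟩

theorem PairVals.pair_f_pow_eq_zero (hp : IsHopfPairing pair) (hUcom : UglComul k n a ai b bi e f)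
    (hOcom : OComulN k n x) (hvals : PairVals n α β a ai b bi e f x pair) {j s t m : ℕ}
    (hj1 : 1 ≤ j) (hjn : j < n) (hs1 : 1 ≤ s) (hsn : s ≤ n) (ht1 : 1 ≤ t) (htn : t ≤ n)
    (hm : 2 ≤ m) : pair (f j) (x s t ^ m) = 0 := by
  refine hp.map_pow_eq_zero_of_comul_eq_tmul_add_tmul
    ((hUcom.com_f j hj1 hjn).trans (add_comm _ _)) (hUcom.cou_f j hj1 hjn) IsGroupLikeElem.one hm ?_
  by_cases hst : s = t
  · left
    rw [hvals.val_f j s t hj1 hjn hs1 hsn ht1 htn, if_neg (by omega)]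
  · right
    exact ⟨hvals.pair_a_mul_b_of_ne hp hOcom (by omega) hjn hj1 hjn.le hs1 hsn ht1 htn hst,
      by rw [hp.pair_one_left, hOcom.2 s t hs1 hsn ht1 htn, if_neg hst]⟩

end GLPairing

theorem pairing_with_l_th_powers_general
    {k : Type u} [Field k]
    {U O : Type v} [Ring U] [Bialgebra k U] [Ring O] [Bialgebra k O]
    (n : ℕ) (α β : k)
    (ℓ : ℕ) (hl3 : 3 ≤ ℓ)
    (hαl : α ^ ℓ = 1) (hβl : β ^ ℓ = 1)
    (a ai b bi e f : ℕ → U) (x : ℕ → ℕ → O)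
    (hUcom : UglComul k n a ai b bi e f)
    (hOcom : OComulN k n x)
    (pair : U →ₗ[k] O →ₗ[k] k)
    (hpair : IsHopfPairing pair)
    (hvals : PairVals n α β a ai b bi e f x pair) :
    ∀ s t, 1 ≤ s → s ≤ n → 1 ≤ t → t ≤ n →
      (∀ i, 1 ≤ i → i ≤ n →
        pair (a i) (x s t ^ ℓ) = (if s = t then 1 else 0) ∧
        pair (ai i) (x s t ^ ℓ) = (if s = t then 1 else 0) ∧
        pair (b i) (x s t ^ ℓ) = (if s = t then 1 else 0) ∧
        pair (bi i) (x s t ^ ℓ) = (if s = t then 1 else 0)) ∧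
      (∀ j, 1 ≤ j → j < n →
        pair (e j) (x s t ^ ℓ) = 0 ∧ pair (f j) (x s t ^ ℓ) = 0) := by
  intro s t hs1 hsn ht1 htn
  have hℓ : ℓ ≠ 0 := by omega
  have hαil : α⁻¹ ^ ℓ = 1 := by rw [inv_pow, hαl, inv_one]
  have hβil : β⁻¹ ^ ℓ = 1 := by rw [inv_pow, hβl, inv_one]
  refine ⟨fun i hi hin => ⟨?_, ?_, ?_, ?_⟩, fun j hj hjn => ⟨?_, ?_⟩⟩
  · rw [hpair.map_pow_of_isGroupLikeElem (hUcom.isGroupLikeElem_a hi hin),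
      hvals.val_a i s t hi hin hs1 hsn ht1 htn, ite_ite_pow_of_pow_eq_one hℓ hαl]
  · rw [hpair.map_pow_of_isGroupLikeElem (hUcom.isGroupLikeElem_ai hi hin),
      hvals.val_ai i s t hi hin hs1 hsn ht1 htn, ite_ite_pow_of_pow_eq_one hℓ hαil]
  · rw [hpair.map_pow_of_isGroupLikeElem (hUcom.isGroupLikeElem_b hi hin),
      hvals.val_b i s t hi hin hs1 hsn ht1 htn, ite_ite_pow_of_pow_eq_one hℓ hβl]
  · rw [hpair.map_pow_of_isGroupLikeElem (hUcom.isGroupLikeElem_bi hi hin),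
      hvals.val_bi i s t hi hin hs1 hsn ht1 htn, ite_ite_pow_of_pow_eq_one hℓ hβil]
  · exact hvals.pair_e_pow_eq_zero hpair hUcom hOcom hj hjn hs1 hsn ht1 htn (by omega)
  · exact hvals.pair_f_pow_eq_zero hpair hUcom hOcom hj hjn hs1 hsn ht1 htn (by omega)

/-- for every generator `u` of `U_{α,β}(gl_n)` one has
`⟨u, x_{st}^ℓ⟩ = δ_{st} ε(u)`; explicitly `⟨a_i^{±1}, x_{st}^ℓ⟩ = δ_{st} = ⟨b_i^{±1}, x_{st}^ℓ⟩`
and `⟨e_j, x_{st}^ℓ⟩ = 0 = ⟨f_j, x_{st}^ℓ⟩`. -/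
theorem pairing_with_l_th_powers
    {k : Type u} [Field k] [IsAlgClosed k] [CharZero k]
    {U O : Type v} [Ring U] [Bialgebra k U] [Ring O] [Bialgebra k O]
    (n : ℕ) (hn : 0 < n) (α β : k) (hα : α ≠ 0) (hβ : β ≠ 0)
    (ℓ : ℕ) (hodd : Odd ℓ) (hl3 : 3 ≤ ℓ)
    (hprim : IsPrimitiveRoot (α⁻¹ * β) ℓ) (hαl : α ^ ℓ = 1) (hβl : β ^ ℓ = 1)
    (hne1 : α ≠ β) (hne2 : α ≠ -β) (hne3 : α ≠ β⁻¹)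
    (a ai b bi e f : ℕ → U) (x : ℕ → ℕ → O)
    (hUrel : UglRel n α β a ai b bi e f) (hUcom : UglComul k n a ai b bi e f)
    (hOrel : QMRelN n α β x) (hOcom : OComulN k n x)
    (pair : U →ₗ[k] O →ₗ[k] k)
    (hpair : IsHopfPairing pair)
    (hvals : PairVals n α β a ai b bi e f x pair) :
    ∀ s t, 1 ≤ s → s ≤ n → 1 ≤ t → t ≤ n →
      (∀ i, 1 ≤ i → i ≤ n →
        pair (a i) (x s t ^ ℓ) = (if s = t then 1 else 0) ∧
        pair (ai i) (x s t ^ ℓ) = (if s = t then 1 else 0) ∧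
        pair (b i) (x s t ^ ℓ) = (if s = t then 1 else 0) ∧
        pair (bi i) (x s t ^ ℓ) = (if s = t then 1 else 0)) ∧
      (∀ j, 1 ≤ j → j < n →
        pair (e j) (x s t ^ ℓ) = 0 ∧ pair (f j) (x s t ^ ℓ) = 0) :=
  pairing_with_l_th_powers_general n α β ℓ hl3 hαl hβl a ai b bi e f x hUcom hOcom pair hpair hvals
end
end

section
/- Set h_i = a_i^{-1} b_i. For all 1 ≤ s,t ≤ n, 1 ≤ i ≤ n and 1 ≤ j ≤ k < n: ⟨h_i^ℓ, x_{st}⟩ = δ_{st}, ⟨h_i^{n_α} a_i^{-1}, x_{st}⟩ = δ_{st}, ⟨h_i^{n_β} b_i^{-1}, x_{st}⟩ = δ_{st}, ⟨E_{k,j}^ℓ, x_{st}⟩ = 0 and ⟨F_{k,j}^ℓ, x_{st}⟩ = 0. -/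
/-!
Since `Δ x_{st} = ∑_r x_{sr} ⊗ x_{rt}`, pairing against the coordinate functions turns
`⟨-,-⟩` into an algebra map `ρ` from `U` to `n × n` matrices, `ρ(u)_{st} = ⟨u, x_{st}⟩`
(the vector representation). Under `ρ` the elements `a_i⁻¹, b_i, b_i⁻¹` are diagonal, so
`ρ(h_i^m) = diag(1, …, q^m, …, 1)` with `q = α⁻¹β` in position `i`; `q^ℓ = 1`,
`q^{n_α} = α` and `q^{n_β} = β` then make all three group-like elements act as the identity.
The root vector `E_{k,j}` (resp. `F_{k,j}`) acts as a multiple of the off-diagonal matrix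
unit at position `(j, k+1)` (resp. `(k+1, j)`), whose square is already `0`.
-/

open scoped TensorProduct

noncomputable section

universe u v

open Matrix

theorem Matrix.single_pow_eq_zero {ι R : Type*} [Fintype ι] [DecidableEq ι] [Semiring R]
    {i j : ι} (hij : i ≠ j) (c : R) {m : ℕ} (hm : 2 ≤ m) : single i j c ^ m = 0 :=
  pow_eq_zero_of_le hm (by rw [sq, single_mul_single_of_ne c i j i hij.symm c])

theorem Matrix.diagonal_ite_mul_diagonal_ite_inv {ι K : Type*} [Fintype ι] [DecidableEq ι]
    [Field K] {c : K} (hc : c ≠ 0) (P : ι → Prop) [DecidablePred P] :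
    (diagonal fun s => if P s then c else 1) * (diagonal fun s => if P s then c⁻¹ else 1) =
      1 := by
  rw [diagonal_mul_diagonal, ← diagonal_one]
  congr 1
  ext s
  split_ifs
  · exact mul_inv_cancel₀ hc
  · exact one_mul 1

theorem IsHopfPairing.pair_mul_of_comul_eq_sum {k : Type u} [Field k] {U O : Type v}
    [Ring U] [Bialgebra k U] [Ring O] [Bialgebra k O] {pair : U →ₗ[k] O →ₗ[k] k}
    (hpair : IsHopfPairing pair) {ι : Type*} (S : Finset ι) (y y' : ι → O) {z : O}
    (hz : Coalgebra.comul (R := k) z = ∑ i ∈ S, y i ⊗ₜ[k] y' i) (u v : U) :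
    pair (u * v) z = ∑ i ∈ S, pair u (y i) * pair v (y' i) := by
  rw [← Finset.sum_coe_sort, ← S.equivFin.symm.sum_comp] at hz
  rw [hpair.pair_mul_left u v z _ _ _ hz]
  exact (S.equivFin.symm.sum_comp fun i : S => pair u (y i) * pair v (y' i)).trans
    (S.sum_coe_sort fun i => pair u (y i) * pair v (y' i))

section PairingRep

variable {k : Type u} [Field k] {U O : Type v} [Ring U] [Bialgebra k U] [Ring O]
  [Bialgebra k O] {n : ℕ} {x : ℕ → ℕ → O} {pair : U →ₗ[k] O →ₗ[k] k}

def pairingRep (hpair : IsHopfPairing pair) (hOcom : OComulN k n x) :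
    U →ₐ[k] Matrix (Finset.Icc 1 n) (Finset.Icc 1 n) k :=
  AlgHom.ofLinearMap
    { toFun := fun u => Matrix.of fun s t => pair u (x s t)
      map_add' := fun u v => by ext; simp
      map_smul' := fun c u => by ext; simp }
    (by
      ext s t
      obtain ⟨hs1, hsn⟩ := Finset.mem_Icc.mp s.2
      obtain ⟨ht1, htn⟩ := Finset.mem_Icc.mp t.2
      simp only [LinearMap.coe_mk, AddHom.coe_mk, Matrix.of_apply, Matrix.one_apply,
        hpair.pair_one_left, hOcom.2 s t hs1 hsn ht1 htn, Subtype.ext_iff])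
    (fun u v => by
      ext s t
      obtain ⟨hs1, hsn⟩ := Finset.mem_Icc.mp s.2
      obtain ⟨ht1, htn⟩ := Finset.mem_Icc.mp t.2
      simp only [LinearMap.coe_mk, AddHom.coe_mk, Matrix.of_apply, Matrix.mul_apply]
      rw [hpair.pair_mul_of_comul_eq_sum _ _ _ (hOcom.1 s t hs1 hsn ht1 htn),
        ← Finset.sum_coe_sort])

variable (hpair : IsHopfPairing pair) (hOcom : OComulN k n x)

theorem pairingRep_apply (u : U) (s t : Finset.Icc 1 n) :
    pairingRep hpair hOcom u s t = pair u (x s t) := rfl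

theorem pairingRep_eq_diagonal {w : U} (d : ℕ → k)
    (hw : ∀ s t, 1 ≤ s → s ≤ n → 1 ≤ t → t ≤ n →
      pair w (x s t) = if s = t then d s else 0) :
    pairingRep hpair hOcom w = diagonal fun s : Finset.Icc 1 n => d s := by
  ext s t
  obtain ⟨hs1, hsn⟩ := Finset.mem_Icc.mp s.2
  obtain ⟨ht1, htn⟩ := Finset.mem_Icc.mp t.2
  rw [pairingRep_apply, hw s t hs1 hsn ht1 htn, diagonal_apply]
  exact if_congr Subtype.ext_iff.symm rfl rfl

theorem pairingRep_eq_single {w : U} {i j : Finset.Icc 1 n} (c : k)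
    (hw : ∀ s t, 1 ≤ s → s ≤ n → 1 ≤ t → t ≤ n →
      pair w (x s t) = if s = i ∧ t = j then c else 0) :
    pairingRep hpair hOcom w = single i j c := by
  ext s t
  obtain ⟨hs1, hsn⟩ := Finset.mem_Icc.mp s.2
  obtain ⟨ht1, htn⟩ := Finset.mem_Icc.mp t.2
  rw [pairingRep_apply, hw s t hs1 hsn ht1 htn, single_apply]
  exact if_congr (by simp only [Subtype.ext_iff, eq_comm]) rfl rfl

theorem pair_eq_ite_of_pairingRep_eq_one {w : U} (hw : pairingRep hpair hOcom w = 1)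
    {s t : ℕ} (hs : s ∈ Finset.Icc 1 n) (ht : t ∈ Finset.Icc 1 n) :
    pair w (x s t) = if s = t then 1 else 0 := by
  rw [← pairingRep_apply hpair hOcom w ⟨s, hs⟩ ⟨t, ht⟩, hw, one_apply]
  exact if_congr Subtype.mk_eq_mk rfl rfl

variable {α β : k} {a ai b bi e f : ℕ → U} (hvals : PairVals n α β a ai b bi e f x pair)
include hvals

theorem pairingRep_ai {i : ℕ} (hi1 : 1 ≤ i) (hin : i ≤ n) :
    pairingRep hpair hOcom (ai i) =
      diagonal fun s : Finset.Icc 1 n => if i = s then α⁻¹ else 1 :=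
  pairingRep_eq_diagonal hpair hOcom _ fun s t hs1 hsn ht1 htn =>
    hvals.val_ai i s t hi1 hin hs1 hsn ht1 htn

theorem pairingRep_b {i : ℕ} (hi1 : 1 ≤ i) (hin : i ≤ n) :
    pairingRep hpair hOcom (b i) =
      diagonal fun s : Finset.Icc 1 n => if i = s then β else 1 :=
  pairingRep_eq_diagonal hpair hOcom _ fun s t hs1 hsn ht1 htn =>
    hvals.val_b i s t hi1 hin hs1 hsn ht1 htn

theorem pairingRep_bi {i : ℕ} (hi1 : 1 ≤ i) (hin : i ≤ n) :
    pairingRep hpair hOcom (bi i) =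
      diagonal fun s : Finset.Icc 1 n => if i = s then β⁻¹ else 1 :=
  pairingRep_eq_diagonal hpair hOcom _ fun s t hs1 hsn ht1 htn =>
    hvals.val_bi i s t hi1 hin hs1 hsn ht1 htn

theorem pairingRep_e {j : ℕ} (hj1 : 1 ≤ j) (hjn : j < n) :
    pairingRep hpair hOcom (e j) =
      single ⟨j, Finset.mem_Icc.mpr ⟨hj1, hjn.le⟩⟩
        ⟨j + 1, Finset.mem_Icc.mpr ⟨by omega, hjn⟩⟩ 1 :=
  pairingRep_eq_single hpair hOcom _ fun s t hs1 hsn ht1 htn =>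
    (hvals.val_e j s t hj1 hjn hs1 hsn ht1 htn).trans
      (if_congr (and_congr_left' eq_comm) rfl rfl)

theorem pairingRep_f {j : ℕ} (hj1 : 1 ≤ j) (hjn : j < n) :
    pairingRep hpair hOcom (f j) =
      single ⟨j + 1, Finset.mem_Icc.mpr ⟨by omega, hjn⟩⟩
        ⟨j, Finset.mem_Icc.mpr ⟨hj1, hjn.le⟩⟩ 1 :=
  pairingRep_eq_single hpair hOcom _ fun s t hs1 hsn ht1 htn =>
    hvals.val_f j s t hj1 hjn hs1 hsn ht1 htn

theorem pairingRep_evecAux {l : ℕ} (hl : 1 ≤ l) : ∀ {d : ℕ} (hld : l + d < n),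
    pairingRep hpair hOcom (EvecAux α e l d) =
      single ⟨l, Finset.mem_Icc.mpr ⟨hl, by omega⟩⟩
        ⟨l + d + 1, Finset.mem_Icc.mpr ⟨by omega, hld⟩⟩ ((-α⁻¹) ^ d)
  | 0, hld => by simpa [EvecAux] using pairingRep_e hpair hOcom hvals hl hld
  | d + 1, hld => by
    rw [EvecAux, map_sub, map_smul, map_mul, map_mul, pairingRep_evecAux hl (by omega),
      pairingRep_e hpair hOcom hvals (j := l + d + 1) (by omega) (by omega),
      single_mul_single_of_ne, single_mul_single_same, smul_single, zero_sub, single_neg]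
    · congr 2
      ring
    · simp only [ne_eq, Subtype.mk.injEq]
      omega

theorem pairingRep_fvecAux {l : ℕ} (hl : 1 ≤ l) : ∀ {d : ℕ} (hld : l + d < n),
    pairingRep hpair hOcom (FvecAux β f l d) =
      single ⟨l + d + 1, Finset.mem_Icc.mpr ⟨by omega, hld⟩⟩
        ⟨l, Finset.mem_Icc.mpr ⟨hl, by omega⟩⟩ 1
  | 0, hld => by simpa [FvecAux] using pairingRep_f hpair hOcom hvals hl hld
  | d + 1, hld => by
    rw [FvecAux, map_sub, map_smul, map_mul, map_mul, pairingRep_fvecAux hl (by omega),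
      pairingRep_f hpair hOcom hvals (j := l + d + 1) (by omega) (by omega),
      single_mul_single_same, single_mul_single_of_ne, smul_zero, sub_zero, mul_one]
    · rfl
    · simp only [ne_eq, Subtype.mk.injEq]
      omega

theorem pairingRep_eroot_pow_eq_zero {j kk m : ℕ} (hj : 1 ≤ j) (hjk : j ≤ kk) (hkn : kk < n)
    (hm : 2 ≤ m) : pairingRep hpair hOcom (Eroot α e kk j ^ m) = 0 := by
  rw [map_pow, Eroot, pairingRep_evecAux hpair hOcom hvals hj (by omega)]
  exact single_pow_eq_zero (by simp only [ne_eq, Subtype.mk.injEq]; omega) _ hm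

theorem pairingRep_froot_pow_eq_zero {j kk m : ℕ} (hj : 1 ≤ j) (hjk : j ≤ kk) (hkn : kk < n)
    (hm : 2 ≤ m) : pairingRep hpair hOcom (Froot β f kk j ^ m) = 0 := by
  rw [map_pow, Froot, pairingRep_fvecAux hpair hOcom hvals hj (by omega)]
  exact single_pow_eq_zero (by simp only [ne_eq, Subtype.mk.injEq]; omega) _ hm

theorem pairingRep_ai_mul_b_pow {i : ℕ} (hi1 : 1 ≤ i) (hin : i ≤ n) (m : ℕ) :
    pairingRep hpair hOcom ((ai i * b i) ^ m) =
      diagonal fun s : Finset.Icc 1 n => if i = s then (α⁻¹ * β) ^ m else 1 := by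
  rw [map_pow, map_mul, pairingRep_ai hpair hOcom hvals hi1 hin,
    pairingRep_b hpair hOcom hvals hi1 hin, diagonal_mul_diagonal, diagonal_pow]
  congr 1
  ext s
  simp only [Pi.pow_apply]
  split_ifs <;> simp

end PairingRep

theorem pairing_kills_central_elements_general
    {k : Type u} [Field k]
    {U O : Type v} [Ring U] [Bialgebra k U] [Ring O] [Bialgebra k O]
    (n : ℕ) (α β : k) (hα : α ≠ 0) (hβ : β ≠ 0)
    (ℓ : ℕ) (hl3 : 3 ≤ ℓ)
    (hprim : IsPrimitiveRoot (α⁻¹ * β) ℓ)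
    (nα nβ : ℕ) (hnα : 0 < nα ∧ nα < ℓ ∧ (α⁻¹ * β) ^ nα = α)
    (hnβ : 0 < nβ ∧ nβ < ℓ ∧ (α⁻¹ * β) ^ nβ = β)
    (a ai b bi e f : ℕ → U) (x : ℕ → ℕ → O)
    (hOcom : OComulN k n x)
    (pair : U →ₗ[k] O →ₗ[k] k)
    (hpair : IsHopfPairing pair)
    (hvals : PairVals n α β a ai b bi e f x pair) :
    ∀ s t, 1 ≤ s → s ≤ n → 1 ≤ t → t ≤ n →
      (∀ i, 1 ≤ i → i ≤ n →
        pair ((ai i * b i) ^ ℓ) (x s t) = (if s = t then 1 else 0) ∧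
        pair ((ai i * b i) ^ nα * ai i) (x s t) = (if s = t then 1 else 0) ∧
        pair ((ai i * b i) ^ nβ * bi i) (x s t) = (if s = t then 1 else 0)) ∧
      (∀ j kk, 1 ≤ j → j ≤ kk → kk < n →
        pair (Eroot α e kk j ^ ℓ) (x s t) = 0 ∧
        pair (Froot β f kk j ^ ℓ) (x s t) = 0) := by
  intro s t hs1 hsn ht1 htn
  have hs : s ∈ Finset.Icc 1 n := Finset.mem_Icc.mpr ⟨hs1, hsn⟩
  have ht : t ∈ Finset.Icc 1 n := Finset.mem_Icc.mpr ⟨ht1, htn⟩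
  refine ⟨fun i hi1 hin => ⟨?_, ?_, ?_⟩, fun j kk hj hjk hkn => ⟨?_, ?_⟩⟩
  · refine pair_eq_ite_of_pairingRep_eq_one hpair hOcom ?_ hs ht
    rw [pairingRep_ai_mul_b_pow hpair hOcom hvals hi1 hin, hprim.pow_eq_one]
    simp only [ite_self, diagonal_one]
  · refine pair_eq_ite_of_pairingRep_eq_one hpair hOcom ?_ hs ht
    rw [map_mul, pairingRep_ai_mul_b_pow hpair hOcom hvals hi1 hin, hnα.2.2,
      pairingRep_ai hpair hOcom hvals hi1 hin]
    exact diagonal_ite_mul_diagonal_ite_inv hα _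
  · refine pair_eq_ite_of_pairingRep_eq_one hpair hOcom ?_ hs ht
    rw [map_mul, pairingRep_ai_mul_b_pow hpair hOcom hvals hi1 hin, hnβ.2.2,
      pairingRep_bi hpair hOcom hvals hi1 hin]
    exact diagonal_ite_mul_diagonal_ite_inv hβ _
  · rw [← pairingRep_apply hpair hOcom _ ⟨s, hs⟩ ⟨t, ht⟩,
      pairingRep_eroot_pow_eq_zero hpair hOcom hvals hj hjk hkn (by omega), Matrix.zero_apply]
  · rw [← pairingRep_apply hpair hOcom _ ⟨s, hs⟩ ⟨t, ht⟩,
      pairingRep_froot_pow_eq_zero hpair hOcom hvals hj hjk hkn (by omega), Matrix.zero_apply]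

/-- with `h_i = a_i⁻¹ b_i`, for all `1 ≤ s,t ≤ n`, `1 ≤ i ≤ n` and
`1 ≤ j ≤ kk < n`: `⟨h_i^ℓ, x_{st}⟩ = δ_{st}`, `⟨h_i^{n_α} a_i⁻¹, x_{st}⟩ = δ_{st}`,
`⟨h_i^{n_β} b_i⁻¹, x_{st}⟩ = δ_{st}`, `⟨E_{kk,j}^ℓ, x_{st}⟩ = 0` and
`⟨F_{kk,j}^ℓ, x_{st}⟩ = 0`. -/
theorem pairing_kills_central_elements
    {k : Type u} [Field k] [IsAlgClosed k] [CharZero k]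
    {U O : Type v} [Ring U] [Bialgebra k U] [Ring O] [Bialgebra k O]
    (n : ℕ) (hn : 0 < n) (α β : k) (hα : α ≠ 0) (hβ : β ≠ 0)
    (ℓ : ℕ) (hodd : Odd ℓ) (hl3 : 3 ≤ ℓ)
    (hprim : IsPrimitiveRoot (α⁻¹ * β) ℓ) (hαl : α ^ ℓ = 1) (hβl : β ^ ℓ = 1)
    (hne1 : α ≠ β) (hne2 : α ≠ -β) (hne3 : α ≠ β⁻¹)
    (nα nβ : ℕ) (hnα : 0 < nα ∧ nα < ℓ ∧ (α⁻¹ * β) ^ nα = α)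
    (hnβ : 0 < nβ ∧ nβ < ℓ ∧ (α⁻¹ * β) ^ nβ = β)
    (a ai b bi e f : ℕ → U) (x : ℕ → ℕ → O)
    (hUrel : UglRel n α β a ai b bi e f) (hUcom : UglComul k n a ai b bi e f)
    (hOrel : QMRelN n α β x) (hOcom : OComulN k n x)
    (pair : U →ₗ[k] O →ₗ[k] k)
    (hpair : IsHopfPairing pair)
    (hvals : PairVals n α β a ai b bi e f x pair) :
    ∀ s t, 1 ≤ s → s ≤ n → 1 ≤ t → t ≤ n →
      (∀ i, 1 ≤ i → i ≤ n →
        pair ((ai i * b i) ^ ℓ) (x s t) = (if s = t then 1 else 0) ∧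
        pair ((ai i * b i) ^ nα * ai i) (x s t) = (if s = t then 1 else 0) ∧
        pair ((ai i * b i) ^ nβ * bi i) (x s t) = (if s = t then 1 else 0)) ∧
      (∀ j kk, 1 ≤ j → j ≤ kk → kk < n →
        pair (Eroot α e kk j ^ ℓ) (x s t) = 0 ∧
        pair (Froot β f kk j ^ ℓ) (x s t) = 0) :=
  pairing_kills_central_elements_general n α β hα hβ ℓ hl3 hprim nα nβ hnα hnβ a ai b bi e f x hOcom
    pair hpair hvals
end
end

section
/- Assume α ≠ 1, β ≠ 1 and α ≠ β. Every algebra homomorphism θ : O_{α,β}(GL_n) → k satisfies θ(x_{ij}) = 0 for all i ≠ j and θ(x_{ii}) ∈ k^× for all i, and the map sending a diagonal matrix Λ = diag(λ_1, …, λ_n) ∈ (k^×)^n to the character x_{ij} ↦ δ_{ij} λ_i is a group isomorphism from the diagonal torus (k^×)^n onto the group Alg(O_{α,β}(GL_n), k) of characters with the convolution product. -/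
/-!
A character `θ` sends the generators to a matrix `t = (θ x_ij)` over the commutative field `k`
satisfying the quantum matrix relations. There the first relation reads
`(1 - α⁻¹) t_ij t_il = 0` for `j < l` and the fourth `(β - α) t_im t_jl = 0` for `i < j`, `l < m`.
The latter kills the term of every permutation with an inversion in the quantum determinant, so
`θ g = ∏ t_ii ≠ 0`, and then the former forces `t` to be diagonal. By the universal property,
characters are thus exactly the invertible diagonal matrices, and on generators the convolution
product is matrix multiplication.
-/

open scoped TensorProduct

noncomputable section

universe u v

/-- `A` (with the family `x`) is "the" quantized coordinate algebra `O_{α,β}(GL_n)`: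
the generators satisfy the quantum matrix relations, the quantum determinant is
invertible, and `A` has the corresponding universal property (which determines
`O_{α,β}(GL_n) = O_{α,β}(M_n)[g⁻¹]` up to unique isomorphism). -/
def IsQGL {k : Type u} [Field k] {A : Type v} [Ring A] [Algebra k A]
    (n : ℕ) (α β : k) (x : Fin n → Fin n → A) : Prop :=
  QMRel n α β x ∧ IsUnit (qdet n β x) ∧
  ∀ (B : Type v) [Ring B] [Algebra k B] (y : Fin n → Fin n → B),
    QMRel n α β y → IsUnit (qdet n β y) →
      ∃! φ : A →ₐ[k] B, ∀ i j, φ (x i j) = y i j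

/-- The convolution product of two characters of a bialgebra `O`:
`(θ ⋆ θ')(z) = θ(z₍₁₎) θ'(z₍₂₎)`. -/
def convChar {k : Type u} [Field k] {O : Type v} [Ring O] [Bialgebra k O]
    (θ θ' : O →ₐ[k] k) : O →ₐ[k] k :=
  (Algebra.TensorProduct.lmul' k).comp
    ((Algebra.TensorProduct.map θ θ').comp (Bialgebra.comulAlgHom k O))

theorem Equiv.Perm.exists_lt_and_apply_lt_of_ne_one {α : Type*} [LinearOrder α] [Finite α]
    {σ : Equiv.Perm α} (hσ : σ ≠ 1) : ∃ l m : α, l < m ∧ σ m < σ l := by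
  by_contra! h
  have hmono : StrictMono σ := fun a b hab => (h a b hab).lt_of_ne (σ.injective.ne hab.ne)
  exact hσ (Equiv.ext (congrFun hmono.eq_id))

theorem permLength_one {n : ℕ} : permLength (1 : Equiv.Perm (Fin n)) = 0 := by
  rw [permLength, Finset.card_eq_zero, Finset.filter_eq_empty_iff]
  exact fun p _ h => lt_asymm h.1 h.2

theorem map_qdet {k : Type u} [Field k] {A B : Type*} [Ring A] [Algebra k A] [Ring B]
    [Algebra k B] {F : Type*} [FunLike F A B] [AlgHomClass F k A B] {n : ℕ} {β : k}
    (x : Fin n → Fin n → A) (f : F) :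
    f (qdet n β x) = qdet n β fun i j => f (x i j) := by
  simp only [qdet, map_sum, map_smul, map_list_prod, List.map_map, Function.comp_def]

theorem qdet_eq_prod_diag {k : Type u} [Field k] {A : Type*} [CommRing A] [Algebra k A]
    {n : ℕ} {β : k} {t : Fin n → Fin n → A}
    (h : ∀ i j l m : Fin n, i < j → l < m → t i m * t j l = 0) :
    qdet n β t = ∏ i, t i i := by
  rw [qdet, Finset.sum_eq_single 1]
  · simp [permLength_one, ← Fin.prod_univ_def]
  · intro σ _ hσ
    obtain ⟨l, m, hlm, hσlm⟩ := σ.exists_lt_and_apply_lt_of_ne_one hσ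
    have hpair : t (σ m) m * t (σ l) l ∣ ∏ i, t (σ i) i := by
      simpa [Finset.prod_pair hlm.ne'] using
        Finset.prod_dvd_prod_of_subset {m, l} Finset.univ (fun i => t (σ i) i) (by simp)
    have hzero : ∏ i, t (σ i) i = 0 := zero_dvd_iff.mp (h _ _ _ _ hσlm hlm ▸ hpair)
    rw [← Fin.prod_univ_def, hzero, smul_zero]
  · simp

namespace QMRel

variable {k : Type u} [Field k] {n : ℕ} {α β : k}

theorem map {A B : Type*} [Ring A] [Algebra k A] [Ring B] [Algebra k B] {F : Type*}
    [FunLike F A B] [AlgHomClass F k A B] (f : F) {x : Fin n → Fin n → A}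
    (h : QMRel n α β x) : QMRel n α β fun i j => f (x i j) := by
  obtain ⟨h1, h2, h3, h4⟩ := h
  refine ⟨fun i j l hjl => ?_, fun i j l hij => ?_, fun i j l m hij hlm => ?_,
    fun i j l m hij hlm => ?_⟩
  · rw [← map_mul, ← map_mul, h1 i j l hjl, map_smul]
  · rw [← map_mul, ← map_mul, h2 i j l hij, map_smul]
  · rw [← map_mul, ← map_mul, h3 i j l m hij hlm, map_smul]
  · rw [← map_mul, ← map_mul, ← map_sub, h4 i j l m hij hlm, map_smul, map_mul]

theorem diagonal {A : Type*} [CommRing A] [Algebra k A] (d : Fin n → A) :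
    QMRel n α β (Matrix.diagonal d) := by
  refine ⟨fun i j l hjl => ?_, fun i j l hij => ?_, fun i j l m hij hlm => ?_,
    fun i j l m hij hlm => ?_⟩ <;> simp only [Matrix.diagonal_apply] <;> split_ifs <;>
    subst_vars <;> first | omega | simp_all [mul_comm]

section Commutative

variable {A : Type*} [CommRing A] [Algebra k A] {t : Fin n → Fin n → A}

theorem mul_eq_zero_of_lt (ht : QMRel n α β t) (hα1 : α ≠ 1) {i j l : Fin n} (hjl : j < l) :
    t i j * t i l = 0 := by
  have h : (1 - α⁻¹) • (t i j * t i l) = 0 := by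
    rw [sub_smul, one_smul, sub_eq_zero, ← ht.1 i j l hjl, mul_comm]
  exact (smul_eq_zero.mp h).resolve_left (sub_ne_zero.mpr (Ne.symm (inv_ne_one.mpr hα1)))

theorem mul_eq_zero_of_lt_of_lt (ht : QMRel n α β t) (hαβ : α ≠ β) {i j l m : Fin n}
    (hij : i < j) (hlm : l < m) : t i m * t j l = 0 := by
  have h : (β - α) • (t i m * t j l) = 0 := by
    rw [← ht.2.2.2 i j l m hij hlm, mul_comm, sub_self]
  exact (smul_eq_zero.mp h).resolve_left (sub_ne_zero.mpr hαβ.symm)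

theorem qdet_eq_prod_diag (ht : QMRel n α β t) (hαβ : α ≠ β) : qdet n β t = ∏ i, t i i :=
  _root_.qdet_eq_prod_diag fun _ _ _ _ hij hlm => ht.mul_eq_zero_of_lt_of_lt hαβ hij hlm

end Commutative

section Field

variable {K : Type*} [Field K] [Algebra k K] {t : Fin n → Fin n → K}

theorem apply_self_ne_zero (ht : QMRel n α β t) (hαβ : α ≠ β) (hdet : IsUnit (qdet n β t))
    (i : Fin n) : t i i ≠ 0 := by
  rw [ht.qdet_eq_prod_diag hαβ, isUnit_iff_ne_zero, Finset.prod_ne_zero_iff] at hdet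
  exact hdet i (Finset.mem_univ i)

theorem apply_eq_zero_of_ne (ht : QMRel n α β t) (hα1 : α ≠ 1) (hαβ : α ≠ β)
    (hdet : IsUnit (qdet n β t)) {i j : Fin n} (hij : i ≠ j) : t i j = 0 := by
  rcases hij.lt_or_gt with h | h
  · exact (mul_eq_zero.mp (ht.mul_eq_zero_of_lt hα1 h)).resolve_left
      (ht.apply_self_ne_zero hαβ hdet i)
  · exact (mul_eq_zero.mp (ht.mul_eq_zero_of_lt hα1 h)).resolve_right
      (ht.apply_self_ne_zero hαβ hdet i)

theorem eq_diagonal (ht : QMRel n α β t) (hα1 : α ≠ 1) (hαβ : α ≠ β)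
    (hdet : IsUnit (qdet n β t)) : t = Matrix.diagonal fun i => t i i := by
  funext i j
  rw [Matrix.diagonal_apply]
  split_ifs with hij
  · rw [hij]
  · exact ht.apply_eq_zero_of_ne hα1 hαβ hdet hij

end Field

end QMRel

theorem qdet_diagonal {k : Type u} [Field k] {A : Type*} [CommRing A] [Algebra k A] {n : ℕ}
    (β : k) (d : Fin n → A) : qdet n β (Matrix.diagonal d) = ∏ i, d i := by
  refine (qdet_eq_prod_diag fun i j l m hij hlm => ?_).trans (by simp)
  by_cases him : i = m
  · simp [Matrix.diagonal_apply_ne d (show j ≠ l by omega)]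
  · simp [Matrix.diagonal_apply_ne d him]

/-- The universal property of `IsQGL` only speaks of targets in the universe of `O`, so `k` is
realised there as the scalar subalgebra `⊥` of `O`. -/
theorem IsQGL.existsUnique_algHom_self {k : Type u} [Field k] {O : Type v} [Ring O] [Algebra k O]
    [Nontrivial O] {n : ℕ} {α β : k} {x : Fin n → Fin n → O} (hx : IsQGL n α β x)
    {y : Fin n → Fin n → k} (hy : QMRel n α β y) (hdet : IsUnit (qdet n β y)) :
    ∃! θ : O →ₐ[k] k, ∀ i j, θ (x i j) = y i j := by
  let e : (⊥ : Subalgebra k O) ≃ₐ[k] k := Algebra.botEquiv k O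
  obtain ⟨φ, hφ, hφ_unique⟩ := hx.2.2 _ (fun i j => e.symm (y i j)) (hy.map e.symm)
    (map_qdet y e.symm ▸ hdet.map e.symm)
  refine ⟨(e : _ →ₐ[k] k).comp φ, fun i j => by simp [hφ], fun θ hθ => ?_⟩
  have h : (e.symm : k →ₐ[k] _).comp θ = φ := hφ_unique _ fun i j => by simp [hθ]
  ext z
  simp [← h]

theorem convChar_apply_of_comul_eq_sum {k : Type u} [Field k] {O : Type v} [Ring O]
    [Bialgebra k O] (θ θ' : O →ₐ[k] k) {ι : Type*} (s : Finset ι) {z : O} {a b : ι → O}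
    (hz : Coalgebra.comul (R := k) z = ∑ i ∈ s, a i ⊗ₜ[k] b i) :
    convChar θ θ' z = ∑ i ∈ s, θ (a i) * θ' (b i) := by
  simp [convChar, Bialgebra.comulAlgHom_apply, hz]

theorem characters_of_quantum_GL_general
    {k : Type u} [Field k]
    {O : Type v} [Ring O] [Bialgebra k O]
    (n : ℕ) (α β : k)
    (hα1 : α ≠ 1) (hαβ : α ≠ β)
    (x : Fin n → Fin n → O)
    (hcomul : ∀ i j, Coalgebra.comul (R := k) (x i j) = ∑ s : Fin n, x i s ⊗ₜ[k] x s j)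
    (hqgl : IsQGL n α β x) :
    (∀ θ : O →ₐ[k] k, (∀ i j : Fin n, i ≠ j → θ (x i j) = 0) ∧ ∀ i : Fin n, θ (x i i) ≠ 0) ∧
    ∃ Φ : (Fin n → kˣ) → (O →ₐ[k] k),
      (∀ (Λ : Fin n → kˣ) (i j : Fin n), Φ Λ (x i j) = if i = j then (Λ i : k) else 0) ∧
      Function.Bijective Φ ∧
      ∀ Λ Λ' : Fin n → kˣ, Φ (Λ * Λ') = convChar (Φ Λ) (Φ Λ') := by
  have : Nontrivial O := (Bialgebra.counitAlgHom k O).toRingHom.domain_nontrivial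
  have hrel (θ : O →ₐ[k] k) : QMRel n α β fun i j => θ (x i j) := hqgl.1.map θ
  have hdet (θ : O →ₐ[k] k) : IsUnit (qdet n β fun i j => θ (x i j)) :=
    map_qdet x θ ▸ hqgl.2.1.map θ
  have hΛ (Λ : Fin n → kˣ) : IsUnit (qdet n β (Matrix.diagonal fun i => (Λ i : k))) := by
    simp [qdet_diagonal, isUnit_iff_ne_zero, Finset.prod_ne_zero_iff]
  choose Φ hΦ hΦ_unique using fun Λ : Fin n → kˣ =>
    hqgl.existsUnique_algHom_self (QMRel.diagonal _) (hΛ Λ)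
  refine ⟨fun θ => ⟨fun i j => (hrel θ).apply_eq_zero_of_ne hα1 hαβ (hdet θ),
    (hrel θ).apply_self_ne_zero hαβ (hdet θ)⟩, Φ, hΦ, ⟨?_, ?_⟩, ?_⟩
  · intro Λ Λ' h
    ext i
    simpa [hΦ] using congr($h (x i i))
  · intro θ
    refine ⟨fun i => Units.mk0 _ ((hrel θ).apply_self_ne_zero hαβ (hdet θ) i),
      (hΦ_unique _ θ fun i j => ?_).symm⟩
    exact congrFun₂ ((hrel θ).eq_diagonal hα1 hαβ (hdet θ)) i j
  · intro Λ Λ'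
    refine (hΦ_unique _ _ fun i j => ?_).symm
    rw [convChar_apply_of_comul_eq_sum _ _ _ (hcomul i j)]
    simp only [hΦ, ← Matrix.mul_apply, Matrix.diagonal_mul_diagonal, Pi.mul_apply, Units.val_mul]

/-- assuming `α ≠ 1`, `β ≠ 1` and `α ≠ β`, every character
`θ : O_{α,β}(GL_n) → k` kills the off-diagonal generators and is nonzero on the diagonal
ones, and `Λ ↦ (x_{ij} ↦ δ_{ij} Λ_i)` is a group isomorphism from the diagonal torus
`(kˣ)ⁿ` onto the group of characters of `O_{α,β}(GL_n)` with the convolution product. -/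
theorem characters_of_quantum_GL
    {k : Type u} [Field k] [IsAlgClosed k] [CharZero k]
    {O : Type v} [Ring O] [Bialgebra k O]
    (n : ℕ) (hn : 0 < n) (α β : k) (hα : α ≠ 0) (hβ : β ≠ 0)
    (hα1 : α ≠ 1) (hβ1 : β ≠ 1) (hαβ : α ≠ β)
    (x : Fin n → Fin n → O)
    (hcomul : ∀ i j, Coalgebra.comul (R := k) (x i j) = ∑ s : Fin n, x i s ⊗ₜ[k] x s j)
    (hcounit : ∀ i j, Coalgebra.counit (R := k) (x i j) = if i = j then (1 : k) else 0)
    (hqgl : IsQGL n α β x) :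
    (∀ θ : O →ₐ[k] k, (∀ i j : Fin n, i ≠ j → θ (x i j) = 0) ∧ ∀ i : Fin n, θ (x i i) ≠ 0) ∧
    ∃ Φ : (Fin n → kˣ) → (O →ₐ[k] k),
      (∀ (Λ : Fin n → kˣ) (i j : Fin n), Φ Λ (x i j) = if i = j then (Λ i : k) else 0) ∧
      Function.Bijective Φ ∧
      ∀ Λ Λ' : Fin n → kˣ, Φ (Λ * Λ') = convChar (Φ Λ) (Φ Λ') :=
  characters_of_quantum_GL_general n α β hα1 hαβ x hcomul hqgl
end
end
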